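/- arXiv:1411.3799 — 9 statements merged into one kernel-verified Lean document; each statement's English description precedes it below -/
import Mathlib

section
/- Let q be a prime power and let F_qP^2 denote the projective plane over F_q. Suppose {A^i_1 × A^i_2}_{i=1}^N is a partition of (F_qP^2)^2 into product sets such that for every i there is a projective line L^i ⊆ F_qP^2 with A^i_1 × A^i_2 ⊆ (L^i)^2. Then N ≥ q(q^2+q+1)/4. -/
/-!
Choose for every part a line containing it, and for every point `x` the part containing `(x, x)`.
For a line `ℓ`, let `S_ℓ` be the points of `ℓ` whose diagonal part is not assigned to `ℓ`. Two
distinct points of `S_ℓ` span `ℓ`, so the parts assigned to `ℓ` partition `S_ℓ × S_ℓ` minus its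
diagonal. Hence `J - I = ∑ 1_{Aᵢ} 1_{Bᵢ}ᵀ` on `S_ℓ`, and comparing ranks gives
`|S_ℓ| ≤ #(parts assigned to ℓ) + 1`. A point of `ℓ` is missing from `S_ℓ` for at most one line `ℓ`,
so summing over the `q² + q + 1` lines, each with `q + 1` points, gives
`(q + 1)(q² + q + 1) ≤ N + 2(q² + q + 1)`, i.e. `N ≥ (q - 1)(q² + q + 1) ≥ q(q² + q + 1)/4`.
-/

/-- A `d`-flat in a projective space over a field: the set of projective points whose
representing line lies in a `(d+1)`-dimensional linear subspace. -/
def IsFlat {K V : Type*} [Field K] [AddCommGroup V] [Module K V]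
    (d : ℕ) (A : Set (Projectivization K V)) : Prop :=
  ∃ W : Submodule K V, Module.finrank K ↥W = d + 1 ∧
    A = {x : Projectivization K V | x.submodule ≤ W}

open Module Finset
open scoped LinearAlgebra.Projectivization

theorem Set.existsUnique_mem_of_iUnion_eq_univ {α ι : Type*} {s : ι → Set α}
    (hdisj : ∀ i j, i ≠ j → Disjoint (s i) (s j)) (hcover : ⋃ i, s i = Set.univ) (a : α) :
    ∃! i, a ∈ s i := by
  obtain ⟨i, hi⟩ := Set.mem_iUnion.1 (hcover ▸ Set.mem_univ a)
  exact ⟨i, hi, fun j hj => by_contra fun hji => Set.disjoint_left.1 (hdisj j i hji) hj hi⟩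

theorem card_le_card_add_one_of_offDiag_partition {α ι : Type*} [Fintype α] [Fintype ι]
    (A B : ι → Set α) (hdiag : ∀ x i, ¬(x ∈ A i ∧ x ∈ B i))
    (hoff : ∀ x y, x ≠ y → ∃! i, x ∈ A i ∧ y ∈ B i) :
    Fintype.card α ≤ Fintype.card ι + 1 := by
  classical
  have hcount : ∀ x y,
      ∑ i, (if x ∈ A i ∧ y ∈ B i then 1 else 0 : ℚ) = if x = y then 0 else 1 := by
    intro x y
    split_ifs with hxy
    · subst hxy
      exact sum_eq_zero fun i _ => if_neg (hdiag x i)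
    · obtain ⟨i, hi, huniq⟩ := hoff x y hxy
      rw [sum_eq_single i (fun j _ hj => if_neg fun h => hj (huniq j h)) (by simp), if_pos hi]
  let X : Matrix α (Option ι) ℚ := .of fun x o => o.elim 1 fun i => if x ∈ A i then 1 else 0
  let Y : Matrix (Option ι) α ℚ := .of fun o y => o.elim 1 fun i => if y ∈ B i then -1 else 0
  -- `1 = J - ∑ᵢ 1_{Aᵢ} 1_{Bᵢ}ᵀ`, and the all-ones matrix `J` is the extra column/row `none`
  have hXY : X * Y = 1 := by
    ext x y
    have hterm : ∀ i, (if x ∈ A i then 1 else 0 : ℚ) * (if y ∈ B i then -1 else 0) =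
        -(if x ∈ A i ∧ y ∈ B i then 1 else 0) := fun i => by
      split_ifs <;> simp_all
    simp only [Matrix.mul_apply, Fintype.sum_option, X, Y, Matrix.of_apply, Option.elim, hterm,
      sum_neg_distrib, hcount, Matrix.one_apply]
    split_ifs <;> norm_num
  calc Fintype.card α = (1 : Matrix α α ℚ).rank := Matrix.rank_one.symm
    _ = (X * Y).rank := by rw [hXY]
    _ ≤ X.rank := Matrix.rank_mul_le_left X Y
    _ ≤ Fintype.card (Option ι) := Matrix.rank_le_card_width X
    _ = Fintype.card ι + 1 := Fintype.card_option

section PartitionIntoLineSquares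

variable {P ι Λ : Type*} [Fintype ι] [DecidableEq Λ] {pts : Λ → Finset P} {A B : ι → Set P}
  {line : ι → Λ}

theorem card_filter_line_diag_ne_le
    (hunique : ∀ x y, x ≠ y → ∀ l l', x ∈ pts l → y ∈ pts l → x ∈ pts l' → y ∈ pts l' → l = l')
    (hline : ∀ i, A i ×ˢ B i ⊆ (pts (line i) : Set P) ×ˢ (pts (line i)))
    (hpart : ∀ x y, ∃! i, x ∈ A i ∧ y ∈ B i) {diag : P → ι}
    (hdiag : ∀ x, x ∈ A (diag x) ∧ x ∈ B (diag x)) (l : Λ) :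
    #{x ∈ pts l | line (diag x) ≠ l} ≤ #{i | line i = l} + 1 := by
  rw [← Fintype.card_coe, ← Fintype.card_coe]
  refine card_le_card_add_one_of_offDiag_partition
    (fun i => {x | ↑x ∈ A i}) (fun i => {y | ↑y ∈ B i}) ?_ ?_
  · rintro ⟨x, hx⟩ ⟨i, hi⟩ hxi
    have hi_diag : i = diag x := (hpart x x).unique hxi (hdiag x)
    exact (mem_filter.1 hx).2 (hi_diag ▸ (mem_filter.1 hi).2)
  · rintro ⟨x, hx⟩ ⟨y, hy⟩ hxy
    obtain ⟨i, hi, huniq⟩ := hpart x y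
    have hxyi := hline i (Set.mk_mem_prod hi.1 hi.2)
    simp only [mem_filter] at hx hy
    have hli : line i = l :=
      hunique x y (fun h => hxy (Subtype.ext h)) _ _ hxyi.1 hxyi.2 hx.1 hy.1
    exact ⟨⟨i, by simpa using hli⟩, hi, fun j hj => Subtype.ext (huniq j hj)⟩

theorem sum_card_le_of_partition_into_line_squares [Fintype P] [Fintype Λ]
    (hunique : ∀ x y, x ≠ y → ∀ l l', x ∈ pts l → y ∈ pts l → x ∈ pts l' → y ∈ pts l' → l = l')
    (hline : ∀ i, A i ×ˢ B i ⊆ (pts (line i) : Set P) ×ˢ (pts (line i)))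
    (hpart : ∀ x y, ∃! i, x ∈ A i ∧ y ∈ B i) :
    ∑ l, #(pts l) ≤ Fintype.card ι + Fintype.card Λ + Fintype.card P := by
  choose diag hdiag using fun x => (hpart x x).exists
  have hon : ∑ l, #{x ∈ pts l | line (diag x) = l} ≤ Fintype.card P :=
    calc ∑ l, #{x ∈ pts l | line (diag x) = l}
        ≤ ∑ l, #{x | line (diag x) = l} :=
          sum_le_sum fun l _ => card_le_card (filter_subset_filter _ (subset_univ _))
      _ = Fintype.card P := (card_eq_sum_card_fiberwise fun x _ => mem_univ _).symm
  have hoff : ∑ l, #{x ∈ pts l | line (diag x) ≠ l} ≤ Fintype.card ι + Fintype.card Λ :=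
    calc ∑ l, #{x ∈ pts l | line (diag x) ≠ l}
        ≤ ∑ l, (#{i | line i = l} + 1) :=
          sum_le_sum fun l _ => card_filter_line_diag_ne_le hunique hline hpart hdiag l
      _ = Fintype.card ι + Fintype.card Λ := by
          rw [sum_add_distrib, ← card_eq_sum_card_fiberwise fun i _ => mem_univ _]
          simp
  calc ∑ l, #(pts l)
      = ∑ l, #{x ∈ pts l | line (diag x) = l} + ∑ l, #{x ∈ pts l | line (diag x) ≠ l} := by
        rw [← sum_add_distrib]
        exact sum_congr rfl fun l _ => (card_filter_add_card_filter_not _).symm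
    _ ≤ _ := by omega

end PartitionIntoLineSquares

namespace Projectivization

section DivisionRing

variable {K V : Type*} [DivisionRing K] [AddCommGroup V] [Module K V]

theorem submodule_le_iff_mem_range_map (W : Submodule K V) (x : ℙ K V) :
    x.submodule ≤ W ↔ x ∈ Set.range (map W.subtype W.injective_subtype) := by
  induction x using ind with | h v hv =>
  rw [submodule_mk, Submodule.span_singleton_le_iff_mem]
  constructor
  · intro hvW
    exact ⟨mk K ⟨v, hvW⟩ (by simpa using hv), rfl⟩
  · rintro ⟨y, hy⟩
    induction y using ind with | h w hw =>
    rw [map_mk, mk_eq_mk_iff] at hy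
    obtain ⟨a, ha⟩ := hy
    exact (W.smul_mem_iff' a).1 (ha ▸ w.2)

theorem card_submodule_le (W : Submodule K V) :
    Nat.card {x : ℙ K V // x.submodule ≤ W} = Nat.card (ℙ K W) := by
  simp_rw [submodule_le_iff_mem_range_map]
  exact Nat.card_range_of_injective (map_injective _ _)

theorem finrank_sup_of_ne [FiniteDimensional K V] {x y : ℙ K V} (h : x ≠ y) :
    finrank K ↥(x.submodule ⊔ y.submodule) = 2 := by
  rw [submodule_eq, submodule_eq, ← Submodule.span_union, Set.singleton_union,
    ← Matrix.range_cons_cons_empty, finrank_span_eq_card (linearIndependent_pair_iff_ne.2 h)]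
  simp

theorem eq_sup_of_finrank_eq_two [FiniteDimensional K V] {x y : ℙ K V} (h : x ≠ y)
    {W : Submodule K V} (hW : finrank K W = 2) (hx : x.submodule ≤ W) (hy : y.submodule ≤ W) :
    W = x.submodule ⊔ y.submodule :=
  (Submodule.eq_of_le_of_finrank_eq (sup_le hx hy) (by rw [finrank_sup_of_ne h, hW])).symm

theorem eq_of_finrank_eq_two_of_ne [FiniteDimensional K V] {x y : ℙ K V} (h : x ≠ y)
    {W W' : Submodule K V} (hW : finrank K W = 2) (hW' : finrank K W' = 2)
    (hx : x.submodule ≤ W) (hy : y.submodule ≤ W) (hx' : x.submodule ≤ W')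
    (hy' : y.submodule ≤ W') : W = W' :=
  (eq_sup_of_finrank_eq_two h hW hx hy).trans (eq_sup_of_finrank_eq_two h hW' hx' hy').symm

end DivisionRing

variable {K V : Type*} [Field K] [AddCommGroup V] [Module K V]

theorem card_filter_submodule_le_of_finrank_eq_two [Finite K] [Fintype (ℙ K V)]
    {W : Submodule K V} [DecidablePred fun x : ℙ K V => x.submodule ≤ W] (hW : finrank K W = 2) :
    #{x : ℙ K V | x.submodule ≤ W} = Nat.card K + 1 := by
  rw [← Fintype.card_subtype, ← Nat.card_eq_fintype_card, card_submodule_le,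
    card_of_finrank_two K W hW]

theorem card_of_finrank_eq_three [Finite K] (hV : finrank K V = 3) :
    Nat.card (ℙ K V) = Nat.card K ^ 2 + Nat.card K + 1 := by
  simp only [card_of_finrank K V hV, sum_range_succ, range_one, sum_singleton, pow_zero, pow_one]
  ring

noncomputable def hyperplanesEquivDual [FiniteDimensional K V] :
    {W : Submodule K V // finrank K W + 1 = finrank K V} ≃ ℙ K (Dual K V) :=
  (Equiv.subtypeEquiv Subspace.orderIsoFiniteDimensional.toEquiv fun W => by
      have := Subspace.finrank_add_finrank_dualAnnihilator_eq W
      show _ ↔ finrank K W.dualAnnihilator = 1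
      omega).trans (equivSubmodule K (Dual K V)).symm

theorem card_lines_of_finrank_eq_three [Finite K] [FiniteDimensional K V]
    (hV : finrank K V = 3) :
    Nat.card {W : Submodule K V // finrank K W = 2} = Nat.card K ^ 2 + Nat.card K + 1 := by
  rw [Nat.card_congr ((Equiv.subtypeEquivRight fun W => by omega).trans hyperplanesEquivDual),
    card_of_finrank_eq_three (by rw [Subspace.dual_finrank_eq, hV])]

end Projectivization

open Projectivization

theorem dpp_plane_lower_bound_general (q N : ℕ) (K : Type) [Field K] [Fintype K]
    (hq : Fintype.card K = q)
    (A₁ A₂ : Fin N → Set (Projectivization K (Fin 3 → K)))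
    (hdisj : ∀ i j, i ≠ j → Disjoint (A₁ i ×ˢ A₂ i) (A₁ j ×ˢ A₂ j))
    (hcover : ⋃ i, A₁ i ×ˢ A₂ i = Set.univ)
    (hline : ∀ i, ∃ L : Set (Projectivization K (Fin 3 → K)),
      IsFlat 1 L ∧ A₁ i ×ˢ A₂ i ⊆ L ×ˢ L) :
    ((q : ℝ) * ((q : ℝ) ^ 2 + q + 1)) / 4 ≤ (N : ℝ) := by
  classical
  have hV : finrank K (Fin 3 → K) = 3 := by simp
  let _ : Fintype (ℙ K (Fin 3 → K)) := Fintype.ofFinite _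
  let _ : Fintype {W : Submodule K (Fin 3 → K) // finrank K W = 2} := Fintype.ofFinite _
  let pts (l : {W : Submodule K (Fin 3 → K) // finrank K W = 2}) : Finset (ℙ K (Fin 3 → K)) :=
    {x | x.submodule ≤ l.1}
  have hsquare : ∀ i, ∃ l, A₁ i ×ˢ A₂ i ⊆ (pts l : Set _) ×ˢ pts l := by
    intro i
    obtain ⟨L, ⟨W, hW, rfl⟩, hsub⟩ := hline i
    exact ⟨⟨W, hW⟩, by simpa [pts] using hsub⟩
  choose line hsquare using hsquare
  have hsum := sum_card_le_of_partition_into_line_squares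
    (fun x y hxy l l' hx hy hx' hy' => Subtype.ext <|
      eq_of_finrank_eq_two_of_ne hxy l.2 l'.2 (mem_filter.1 hx).2 (mem_filter.1 hy).2
        (mem_filter.1 hx').2 (mem_filter.1 hy').2)
    hsquare (fun x y => Set.existsUnique_mem_of_iUnion_eq_univ hdisj hcover (x, y))
  rw [sum_congr rfl fun l _ => card_filter_submodule_le_of_finrank_eq_two l.2, sum_const,
    card_univ, Fintype.card_fin, ← Nat.card_eq_fintype_card, card_lines_of_finrank_eq_three hV,
    ← Nat.card_eq_fintype_card, card_of_finrank_eq_three hV, Nat.card_eq_fintype_card,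
    hq] at hsum
  have hq2 : (2 : ℝ) ≤ q := by exact_mod_cast hq ▸ Fintype.one_lt_card
  have hcount : ((q : ℝ) ^ 2 + q + 1) * (q + 1) ≤ N + 2 * ((q : ℝ) ^ 2 + q + 1) := by
    exact_mod_cast (by simpa [two_mul, add_assoc] using hsum)
  nlinarith

/-- any partition of `(F_qP²)²` into product sets, each contained in the
square of a projective line, has at least `q(q²+q+1)/4` parts. -/
theorem dpp_plane_lower_bound (q N : ℕ) (K : Type) [Field K] [Fintype K]
    (hq : Fintype.card K = q)
    (A₁ A₂ : Fin N → Set (Projectivization K (Fin 3 → K)))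
    (hne : ∀ i, (A₁ i ×ˢ A₂ i).Nonempty)
    (hdisj : ∀ i j, i ≠ j → Disjoint (A₁ i ×ˢ A₂ i) (A₁ j ×ˢ A₂ j))
    (hcover : ⋃ i, A₁ i ×ˢ A₂ i = Set.univ)
    (hline : ∀ i, ∃ L : Set (Projectivization K (Fin 3 → K)),
      IsFlat 1 L ∧ A₁ i ×ˢ A₂ i ⊆ L ×ˢ L) :
    ((q : ℝ) * ((q : ℝ) ^ 2 + q + 1)) / 4 ≤ (N : ℝ) :=
  dpp_plane_lower_bound_general q N K hq A₁ A₂ hdisj hcover hline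
end

section
/- Let q be a prime power and let F_qP^2 denote the projective plane over F_q. There exists a partition of (F_qP^2)^2 into exactly (q^2+q+1)(q+1) product sets A^i_1 × A^i_2 such that for every i there is a projective line L^i ⊆ F_qP^2 with A^i_1 × A^i_2 ⊆ (L^i)^2. -/
namespace Configuration

open HasLines Nondegenerate

variable {P L : Type*} [Membership P L]

def flagFiber (c : P → L) (f : Σ p : P, {l : L // p ∈ l}) : Set P :=
  {x | x ∈ f.2.1 ∧ (x = f.1 → f.2.1 = c f.1)}

lemma flagFiber_subset (c : P → L) (f : Σ p : P, {l : L // p ∈ l}) :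
    flagFiber c f ⊆ {x | x ∈ f.2.1} :=
  fun _ hx => hx.1

lemma eq_of_mem_flagFiber [Nondegenerate P L] {c : P → L} {f g : Σ p : P, {l : L // p ∈ l}}
    {x : P} (hfg : f.1 = g.1) (hf : x ∈ flagFiber c f) (hg : x ∈ flagFiber c g) : f = g := by
  obtain ⟨p, l, hpl⟩ := f
  obtain ⟨p', l', hpl'⟩ := g
  obtain rfl : p = p' := hfg
  obtain rfl : l = l' := by
    by_cases hxp : x = p
    · exact (hf.2 hxp).trans (hg.2 hxp).symm
    · exact (eq_or_eq hf.1 hpl hg.1 hpl').resolve_left hxp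
  rfl

lemma disjoint_prod_flagFiber [Nondegenerate P L] (c : P → L) {f g : Σ p : P, {l : L // p ∈ l}}
    (hfg : f ≠ g) : Disjoint ({f.1} ×ˢ flagFiber c f) ({g.1} ×ˢ flagFiber c g) := by
  rw [Set.disjoint_left]
  rintro ⟨x, y⟩ ⟨rfl, hy⟩ ⟨hx, hy'⟩
  exact hfg (eq_of_mem_flagFiber hx hy hy')

lemma iUnion_prod_flagFiber [HasLines P L] {c : P → L} (hc : ∀ p, p ∈ c p) :
    ⋃ f : Σ p : P, {l : L // p ∈ l}, {f.1} ×ˢ flagFiber c f = Set.univ := by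
  refine Set.iUnion_eq_univ_iff.2 fun ⟨x, y⟩ => ?_
  by_cases hxy : x = y
  · subst hxy
    exact ⟨⟨x, c x, hc x⟩, rfl, hc x, fun _ => rfl⟩
  · exact ⟨⟨x, mkLine hxy, (mkLine_ax hxy).1⟩, rfl, (mkLine_ax hxy).2,
      fun h => absurd h.symm hxy⟩

variable [ProjectivePlane P L] [Finite P] [Finite L]

lemma ProjectivePlane.exists_mem_ne (l : L) (p : P) : ∃ x, x ∈ l ∧ x ≠ p :=
  Set.exists_ne_of_one_lt_ncard (s := {x | x ∈ l})
    (by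
      rw [← Nat.card_coe_set_eq]
      exact (ProjectivePlane.two_lt_pointCount P l).trans' one_lt_two) p

lemma ProjectivePlane.exists_mem_line (p : P) : ∃ l : L, p ∈ l := by
  obtain ⟨l, -⟩ := exists_line (L := L) p
  obtain ⟨x, -, hxp⟩ := ProjectivePlane.exists_mem_ne l p
  exact ⟨mkLine hxp, (mkLine_ax hxp).2⟩

lemma ProjectivePlane.flagFiber_nonempty (c : P → L) (f : Σ p : P, {l : L // p ∈ l}) :
    (flagFiber c f).Nonempty :=
  let ⟨x, hx, hxp⟩ := ProjectivePlane.exists_mem_ne f.2.1 f.1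
  ⟨x, hx, fun h => absurd h hxp⟩

lemma ProjectivePlane.card_flags : Nat.card (Σ p : P, {l : L // p ∈ l}) =
    (order P L ^ 2 + order P L + 1) * (order P L + 1) := by
  have := Fintype.ofFinite P
  rw [Nat.card_sigma]
  simp only [← lineCount.eq_def, ProjectivePlane.lineCount_eq L, Finset.sum_const,
    Finset.card_univ, smul_eq_mul]
  rw [ProjectivePlane.card_points P L]

theorem ProjectivePlane.exists_prod_partition_of_order_eq {n : ℕ} (hn : order P L = n) :
    ∃ A₁ A₂ : Fin ((n ^ 2 + n + 1) * (n + 1)) → Set P,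
      (∀ i, (A₁ i ×ˢ A₂ i).Nonempty) ∧
      (∀ i j, i ≠ j → Disjoint (A₁ i ×ˢ A₂ i) (A₁ j ×ˢ A₂ j)) ∧
      (⋃ i, A₁ i ×ˢ A₂ i) = Set.univ ∧
      ∀ i, ∃ l : L, A₁ i ×ˢ A₂ i ⊆ {x | x ∈ l} ×ˢ {x | x ∈ l} := by
  choose c hc using ProjectivePlane.exists_mem_line (L := L) (P := P)
  let e := (Finite.equivFinOfCardEq (hn ▸ ProjectivePlane.card_flags (P := P) (L := L))).symm
  refine ⟨fun i => {(e i).1}, fun i => flagFiber c (e i),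
    fun i => (Set.singleton_nonempty _).prod (ProjectivePlane.flagFiber_nonempty c _),
    fun i j hij => disjoint_prod_flagFiber c (e.injective.ne hij),
    (e.surjective.iUnion_comp fun f => {f.1} ×ˢ flagFiber c f).trans (iUnion_prod_flagFiber hc),
    fun i => ⟨(e i).2.1, Set.prod_mono (Set.singleton_subset_iff.2 (e i).2.2)
      (flagFiber_subset c _)⟩⟩

end Configuration

open Configuration
open scoped LinearAlgebra.Projectivization

lemma Projectivization.isFlat_setOf_orthogonal {K : Type*} [Field K] {n : ℕ}
    (w : ℙ K (Fin (n + 2) → K)) : IsFlat n {x | x.orthogonal w} := by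
  induction w with | h w hw =>
  let f := dotProductEquiv K (Fin (n + 2)) w
  have hf : f ≠ 0 := (map_ne_zero_iff _ (dotProductEquiv K _).injective).2 hw
  refine ⟨LinearMap.ker f, ?_, ?_⟩
  · have := f.finrank_ker_add_one_of_ne_zero hf
    rw [Module.finrank_fin_fun] at this
    omega
  · ext x
    induction x with | h v hv =>
    simp only [Set.mem_ofPred_eq, orthogonal_mk, submodule_mk, Submodule.span_singleton_le_iff_mem,
      LinearMap.mem_ker, f, dotProductEquiv_apply_apply, dotProduct_comm]

lemma ProjectivePlane.ofField.order_eq_card {K : Type*} [Field K] [DecidableEq K] [Finite K] :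
    ProjectivePlane.order (ℙ K (Fin 3 → K)) (ℙ K (Fin 3 → K)) = Nat.card K := by
  have := Fintype.ofFinite (ℙ K (Fin 3 → K))
  have hcard := Projectivization.card_of_finrank K (Fin 3 → K) (Module.finrank_fin_fun K)
  rw [Nat.card_eq_fintype_card, ProjectivePlane.card_points _ (ℙ K (Fin 3 → K))] at hcard
  simp only [Finset.sum_range_succ, Finset.sum_range_zero] at hcard
  exact le_antisymm (by nlinarith) (by nlinarith)

/-- there is a partition of `(F_qP²)²` into exactly `(q²+q+1)(q+1)` product
sets, each contained in the square of a projective line. -/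
theorem dpp_plane_upper_bound (q : ℕ) (K : Type) [Field K] [Fintype K]
    (hq : Fintype.card K = q) :
    ∃ A₁ A₂ : Fin ((q ^ 2 + q + 1) * (q + 1)) → Set (Projectivization K (Fin 3 → K)),
      (∀ i, (A₁ i ×ˢ A₂ i).Nonempty) ∧
      (∀ i j, i ≠ j → Disjoint (A₁ i ×ˢ A₂ i) (A₁ j ×ˢ A₂ j)) ∧
      (⋃ i, A₁ i ×ˢ A₂ i) = Set.univ ∧
      ∀ i, ∃ L : Set (Projectivization K (Fin 3 → K)),
        IsFlat 1 L ∧ A₁ i ×ˢ A₂ i ⊆ L ×ˢ L := by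
  classical
  have horder : ProjectivePlane.order (ℙ K (Fin 3 → K)) (ℙ K (Fin 3 → K)) = q := by
    rw [ProjectivePlane.ofField.order_eq_card, Nat.card_eq_fintype_card, hq]
  obtain ⟨A₁, A₂, hne, hdisj, hcov, hline⟩ :=
    ProjectivePlane.exists_prod_partition_of_order_eq horder
  refine ⟨A₁, A₂, hne, hdisj, hcov, fun i => ?_⟩
  obtain ⟨l, hl⟩ := hline i
  exact ⟨{x | x ∈ l}, Projectivization.isFlat_setOf_orthogonal l, hl⟩
end

section
/- Let q be a prime power and let {S^i}_{i=1}^N be a partition of the projective plane F_qP^2 such that each S^i is contained in some projective line. For a projective line L, let φ(L) denote the number of indices i with S^i ∩ L ≠ ∅. Then ∑_L φ(L) ≥ q(q^2+q+1), where the sum is over all projective lines L of F_qP^2. -/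
/-!
Each part `Sⁱ` lies on a line `Mᵢ`. Through every point pass `q + 1` lines (they cover the
other `q² + q` points, `q` at a time), `q` of them different from `Mᵢ`; and a line other
than `Mᵢ` meets `Sⁱ ⊆ Mᵢ` in at most one point. Hence at least `q |Sⁱ|` lines meet `Sⁱ`, and
exchanging the order of summation gives `∑_L φ(L) = ∑ᵢ #{L | L ∩ Sⁱ ≠ ∅} ≥ q ∑ᵢ |Sⁱ|`.
-/

open scoped BigOperators

open Function Module
open scoped LinearAlgebra.Projectivization

theorem finsum_mem_ncard_setOf_comm {ι β : Type*} [Finite ι] [Finite β] (R : ι → β → Prop)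
    (s : Set β) :
    ∑ᶠ b ∈ s, {i | R i b}.ncard = ∑ᶠ i, {b ∈ s | R i b}.ncard := by
  classical
  have := Fintype.ofFinite ι
  have := Fintype.ofFinite β
  rw [finsum_mem_eq_toFinset_sum, finsum_eq_sum_of_fintype]
  simp only [Set.ncard_eq_toFinset_card', Set.toFinset_ofPred, Finset.card_filter]
  rw [Finset.sum_comm]
  simp [← Finset.filter_filter, Set.filter_mem_univ_eq_toFinset]

theorem finsum_ncard_eq_card_of_iUnion_eq_univ {ι P : Type*} [Finite ι] [Finite P]
    {S : ι → Set P} (hdisj : Pairwise (Disjoint on S)) (hcover : ⋃ i, S i = Set.univ) :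
    ∑ᶠ i, (S i).ncard = Nat.card P := by
  rw [← Set.ncard_iUnion_of_finite (fun i => (S i).toFinite) hdisj, hcover, Set.ncard_univ]

section Incidence

variable {P : Type*} [Finite P] {𝓛 : Set (Set P)}

theorem mul_ncard_le_ncard_lines_meeting (k : ℕ)
    (h𝓛 : ∀ L ∈ 𝓛, ∀ L' ∈ 𝓛, L ≠ L' → (L ∩ L').Subsingleton)
    {S M : Set P} (hM : M ∈ 𝓛) (hSM : S ⊆ M)
    (hdeg : ∀ p ∈ S, k + 1 ≤ {L ∈ 𝓛 | p ∈ L}.ncard) :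
    k * S.ncard ≤ {L ∈ 𝓛 | (S ∩ L).Nonempty}.ncard := by
  set B : P → Set (Set P) := fun p => {L ∈ 𝓛 | p ∈ L} \ {M}
  have hBcard : ∀ p ∈ S, k ≤ (B p).ncard := fun p hp => by
    simp only [B]
    have := Set.ncard_sdiff_singleton_add_one (show M ∈ {L ∈ 𝓛 | p ∈ L} from ⟨hM, hSM hp⟩)
    have := hdeg p hp
    omega
  -- a line other than `M` meets `M ⊇ S` in at most one point
  have hBdisj : S.PairwiseDisjoint B := by
    intro p hp p' hp' hpp'
    refine Set.disjoint_left.2 fun L hL hL' => hL.2 ?_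
    exact by_contra fun hLM => hpp' (h𝓛 L hL.1.1 M hM hLM ⟨hL.1.2, hSM hp⟩ ⟨hL'.1.2, hSM hp'⟩)
  have hBsub : ⋃ p ∈ S, B p ⊆ {L ∈ 𝓛 | (S ∩ L).Nonempty} := by
    simp only [Set.iUnion_subset_iff]
    exact fun p hp L hL => ⟨hL.1.1, p, hp, hL.1.2⟩
  have hS := S.toFinite
  calc k * S.ncard = hS.toFinset.card • k := by
        rw [Set.ncard_eq_toFinset_card S hS, smul_eq_mul, mul_comm]
    _ ≤ ∑ p ∈ hS.toFinset, (B p).ncard :=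
        Finset.card_nsmul_le_sum _ _ _ fun p hp => hBcard p (hS.mem_toFinset.1 hp)
    _ = (⋃ p ∈ S, B p).ncard := by
        rw [hS.ncard_biUnion (fun p _ => (B p).toFinite) hBdisj,
          finsum_mem_eq_finite_toFinset_sum _ hS]
    _ ≤ _ := Set.ncard_le_ncard hBsub

theorem card_le_mul_ncard_lines_through_add_one (k : ℕ)
    (h𝓛 : ∀ x y : P, x ≠ y → ∃ L ∈ 𝓛, x ∈ L ∧ y ∈ L) (hcard : ∀ L ∈ 𝓛, L.ncard ≤ k + 1)
    (p : P) : Nat.card P ≤ k * {L ∈ 𝓛 | p ∈ L}.ncard + 1 := by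
  have hcover : {p}ᶜ ⊆ ⋃ L ∈ {L ∈ 𝓛 | p ∈ L}, L \ {p} := by
    intro x hx
    obtain ⟨L, hL, hpL, hxL⟩ := h𝓛 p x (Ne.symm hx)
    exact Set.mem_biUnion ⟨hL, hpL⟩ ⟨hxL, hx⟩
  have hLp : ∀ L ∈ {L ∈ 𝓛 | p ∈ L}, (L \ {p}).ncard ≤ k := fun L hL => by
    have := Set.ncard_sdiff_singleton_add_one hL.2
    have := hcard L hL.1
    omega
  have hlines := Set.toFinite {L ∈ 𝓛 | p ∈ L}
  calc Nat.card P = ({p}ᶜ : Set P).ncard + 1 := by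
        rw [← Set.ncard_univ, ← Set.ncard_sdiff_singleton_add_one (Set.mem_univ p),
          Set.compl_eq_univ_sdiff]
    _ ≤ (⋃ L ∈ {L ∈ 𝓛 | p ∈ L}, L \ {p}).ncard + 1 :=
        Nat.add_le_add_right (Set.ncard_le_ncard hcover) 1
    _ ≤ ∑ L ∈ hlines.toFinset, (L \ {p}).ncard + 1 := by
        gcongr
        simpa using hlines.toFinset.set_ncard_biUnion_le (· \ {p})
    _ ≤ hlines.toFinset.card • k + 1 := by
        gcongr
        exact Finset.sum_le_card_nsmul _ _ _ fun L hL => hLp L (hlines.mem_toFinset.1 hL)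
    _ = k * {L ∈ 𝓛 | p ∈ L}.ncard + 1 := by
        rw [Set.ncard_eq_toFinset_card _ hlines, smul_eq_mul, mul_comm]

end Incidence

theorem mul_card_le_finsum_ncard_parts_meeting {ι P : Type*} [Finite ι] [Finite P]
    {𝓛 : Set (Set P)} (k : ℕ) (h𝓛 : ∀ L ∈ 𝓛, ∀ L' ∈ 𝓛, L ≠ L' → (L ∩ L').Subsingleton)
    (hdeg : ∀ p, k + 1 ≤ {L ∈ 𝓛 | p ∈ L}.ncard) {S : ι → Set P}
    (hdisj : Pairwise (Disjoint on S)) (hcover : ⋃ i, S i = Set.univ)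
    (hline : ∀ i, ∃ L ∈ 𝓛, S i ⊆ L) :
    k * Nat.card P ≤ ∑ᶠ L ∈ 𝓛, {i | (S i ∩ L).Nonempty}.ncard := by
  have := Fintype.ofFinite ι
  rw [← finsum_ncard_eq_card_of_iUnion_eq_univ hdisj hcover, finsum_mem_ncard_setOf_comm,
    finsum_eq_sum_of_fintype, finsum_eq_sum_of_fintype, Finset.mul_sum]
  refine Finset.sum_le_sum fun i _ => ?_
  obtain ⟨M, hM, hSM⟩ := hline i
  exact mul_ncard_le_ncard_lines_meeting k h𝓛 hM hSM fun p _ => hdeg p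

section Projective

variable {K V : Type*} [Field K] [AddCommGroup V] [Module K V]

open Projectivization

namespace Projectivization

theorem range_map_subtype (W : Submodule K V) :
    Set.range (map W.subtype W.injective_subtype) = {x : ℙ K V | x.submodule ≤ W} := by
  ext x
  induction x using Projectivization.ind with
  | h v hv =>
    simp only [Set.mem_range, Set.mem_ofPred_eq, submodule_mk,
      Submodule.span_singleton_le_iff_mem]
    constructor
    · rintro ⟨y, hy⟩
      induction y using Projectivization.ind with
      | h w hw =>
        rw [map_mk, mk_eq_mk_iff] at hy
        obtain ⟨a, ha⟩ := hy
        exact (W.smul_mem_iff' a).1 (ha ▸ w.2)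
    · intro hvW
      exact ⟨mk K ⟨v, hvW⟩ (by simpa using hv), by rw [map_mk]; rfl⟩

theorem finrank_submodule_sup_submodule {x y : ℙ K V} (h : x ≠ y) :
    finrank K ↥(x.submodule ⊔ y.submodule) = 2 := by
  have := finrank_span_eq_card (linearIndependent_pair_iff_ne.2 h)
  rw [Matrix.range_cons, Matrix.range_cons, Matrix.range_empty, Set.union_empty,
    Set.union_singleton, Set.insert_eq, Submodule.span_union] at this
  rwa [submodule_eq x, submodule_eq y, sup_comm]

end Projectivization

theorem IsFlat.ncard [Finite K] {d : ℕ} {A : Set (ℙ K V)} (hA : IsFlat d A) :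
    A.ncard = ∑ i ∈ Finset.range (d + 1), Nat.card K ^ i := by
  obtain ⟨W, hW, rfl⟩ := hA
  rw [← range_map_subtype, Set.ncard_range_of_injective (map_injective _ _),
    card_of_finrank K W hW]

theorem isFlat_one_sup {x y : ℙ K V} (h : x ≠ y) :
    IsFlat 1 {z : ℙ K V | z.submodule ≤ x.submodule ⊔ y.submodule} :=
  ⟨_, finrank_submodule_sup_submodule h, rfl⟩

theorem IsFlat.inter_subsingleton {L L' : Set (ℙ K V)} (hL : IsFlat 1 L) (hL' : IsFlat 1 L')
    (hne : L ≠ L') : (L ∩ L').Subsingleton := by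
  obtain ⟨W, hW, rfl⟩ := hL
  obtain ⟨W', hW', rfl⟩ := hL'
  intro x ⟨hxW, hxW'⟩ y ⟨hyW, hyW'⟩
  by_contra hxy
  have h2 := finrank_submodule_sup_submodule hxy
  have : FiniteDimensional K W := Module.finite_of_finrank_eq_succ hW
  have : FiniteDimensional K W' := Module.finite_of_finrank_eq_succ hW'
  have hW_eq := Submodule.eq_of_le_of_finrank_le
    (show x.submodule ⊔ y.submodule ≤ W from sup_le hxW hyW) (by rw [hW, h2])
  have hW'_eq := Submodule.eq_of_le_of_finrank_le
    (show x.submodule ⊔ y.submodule ≤ W' from sup_le hxW' hyW') (by rw [hW', h2])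
  exact hne (by rw [← hW_eq, ← hW'_eq])

variable [Finite K]

theorem Projectivization.card_of_finrank_three (hV : finrank K V = 3) :
    Nat.card (ℙ K V) = Nat.card K ^ 2 + Nat.card K + 1 := by
  rw [card_of_finrank K V hV]
  simp only [Finset.sum_range_succ, Finset.range_one, Finset.sum_singleton, pow_zero, pow_one]
  ring

theorem add_one_le_ncard_isFlat_one_through (hV : finrank K V = 3) (p : ℙ K V) :
    Nat.card K + 1 ≤ {L ∈ {L : Set (ℙ K V) | IsFlat 1 L} | p ∈ L}.ncard := by
  have : Module.Finite K V := Module.finite_of_finrank_eq_succ hV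
  have : Finite V := Module.finite_of_finite K
  have hcard := card_le_mul_ncard_lines_through_add_one (𝓛 := {L | IsFlat 1 L}) (Nat.card K)
    (fun x y h => ⟨_, isFlat_one_sup h, (le_sup_left : x.submodule ≤ _),
      (le_sup_right : y.submodule ≤ _)⟩)
    (fun L hL => by simp [IsFlat.ncard hL]) p
  rw [Projectivization.card_of_finrank_three hV] at hcard
  have hq : 0 < Nat.card K := Nat.card_pos
  refine Nat.le_of_mul_le_mul_left ?_ hq
  nlinarith

end Projective

theorem sum_phi_lower_bound_general (q N : ℕ) (K : Type) [Field K] [Fintype K]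
    (hq : Fintype.card K = q)
    (S : Fin N → Set (Projectivization K (Fin 3 → K)))
    (hdisj : ∀ i j, i ≠ j → Disjoint (S i) (S j))
    (hcover : ⋃ i, S i = Set.univ)
    (hline : ∀ i, ∃ L : Set (Projectivization K (Fin 3 → K)), IsFlat 1 L ∧ S i ⊆ L) :
    q * (q ^ 2 + q + 1) ≤
      ∑ᶠ L ∈ {L : Set (Projectivization K (Fin 3 → K)) | IsFlat 1 L},
        Set.ncard {i : Fin N | (S i ∩ L).Nonempty} := by
  have hV : finrank K (Fin 3 → K) = 3 := Module.finrank_fin_fun K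
  rw [← hq, ← Nat.card_eq_fintype_card, ← Projectivization.card_of_finrank_three hV]
  exact mul_card_le_finsum_ncard_parts_meeting _
    (fun L hL L' hL' => IsFlat.inter_subsingleton hL hL')
    (add_one_le_ncard_isFlat_one_through hV) (fun i j => hdisj i j) hcover hline

/-- if `{Sⁱ}` is a partition of the projective plane `F_qP²` with each part
contained in a line, and `φ(L)` is the number of parts meeting a line `L`, then
`∑_L φ(L) ≥ q(q²+q+1)`, summing over all projective lines. -/
theorem sum_phi_lower_bound (q N : ℕ) (K : Type) [Field K] [Fintype K]
    (hq : Fintype.card K = q)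
    (S : Fin N → Set (Projectivization K (Fin 3 → K)))
    (hne : ∀ i, (S i).Nonempty)
    (hdisj : ∀ i j, i ≠ j → Disjoint (S i) (S j))
    (hcover : ⋃ i, S i = Set.univ)
    (hline : ∀ i, ∃ L : Set (Projectivization K (Fin 3 → K)), IsFlat 1 L ∧ S i ⊆ L) :
    q * (q ^ 2 + q + 1) ≤
      ∑ᶠ L ∈ {L : Set (Projectivization K (Fin 3 → K)) | IsFlat 1 L},
        Set.ncard {i : Fin N | (S i ∩ L).Nonempty} :=
  sum_phi_lower_bound_general q N K hq S hdisj hcover hline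
end

section
/- Let q be a prime power, n ≥ 1, and let L be a nonempty set of at most n+1 projective lines in F_qP^n in general position, meaning that for every k with 1 ≤ k ≤ n−1, no k+1 of the lines in L are contained in a common k-flat. Then there exists a line l ∈ L and two points p, p' ∈ l such that for every l' ∈ L with l' ≠ l, the intersection l ∩ l' is contained in {p, p'}. -/
open Module Finset
open scoped LinearAlgebra.Projectivization

section Cardinality

variable {α : Type*}

theorem Set.one_lt_encard_or_one_lt_encard_of_subset_union {s t u : Set α}
    (h : 2 < s.encard) (hs : s ⊆ t ∪ u) : 1 < t.encard ∨ 1 < u.encard := by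
  by_contra! htu
  have hle : s.encard ≤ 1 + 1 :=
    (Set.encard_mono hs).trans ((Set.encard_union_le t u).trans (add_le_add htu.1 htu.2))
  exact (h.trans_le hle).ne one_add_one_eq_two.symm

theorem Set.exists_subset_pair_of_encard_le_two {s A : Set α} (hA : A.Nonempty) (hs : s ⊆ A)
    (h : s.encard ≤ 2) : ∃ p ∈ A, ∃ p' ∈ A, s ⊆ {p, p'} := by
  rcases h.lt_or_eq with h | h
  · rw [← one_add_one_eq_two, ENat.lt_add_one_iff (by simp)] at h
    rcases Set.encard_le_one_iff_eq.1 h with rfl | ⟨x, rfl⟩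
    · obtain ⟨a, ha⟩ := hA
      exact ⟨a, ha, a, ha, Set.empty_subset _⟩
    · exact ⟨x, hs rfl, x, hs rfl, by simp⟩
  · obtain ⟨x, y, -, rfl⟩ := Set.encard_eq_two.1 h
    exact ⟨x, hs (by simp), y, hs (by simp), subset_rfl⟩

end Cardinality

theorem Finset.exists_subset_sup_eq_forall_not_le_sup_erase {α β : Type*} [DecidableEq α]
    [SemilatticeSup β] [OrderBot β] (f : α → β) (L : Finset α) :
    ∃ T ⊆ L, T.sup f = L.sup f ∧ ∀ l ∈ T, ¬ f l ≤ (T.erase l).sup f := by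
  classical
  obtain ⟨T, hT, hmin⟩ :=
    exists_min_image {T ∈ L.powerset | T.sup f = L.sup f} card ⟨L, by simp⟩
  rw [mem_filter, mem_powerset] at hT
  refine ⟨T, hT.1, hT.2, fun l hl hle => ?_⟩
  have hsup : (T.erase l).sup f = L.sup f := by
    rw [← hT.2]
    conv_rhs => rw [← insert_erase hl]
    rw [sup_insert, sup_eq_right.2 hle]
  have hcard := hmin _ (mem_filter.2 ⟨mem_powerset.2 ((erase_subset l T).trans hT.1), hsup⟩)
  rw [card_erase_of_mem hl] at hcard
  have := card_pos.2 ⟨l, hl⟩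
  omega

def intersectionPoints {α : Type*} (L : Finset (Set α)) (l : Set α) : Set α :=
  {x ∈ l | ∃ l' ∈ L, l' ≠ l ∧ x ∈ l'}

section IntersectionPoints

variable {α : Type*} {L : Finset (Set α)} {l : Set α}

theorem intersectionPoints_subset : intersectionPoints L l ⊆ l := fun _ hx => hx.1

theorem intersectionPoints_subset_iff {s : Set α} :
    intersectionPoints L l ⊆ s ↔ ∀ l' ∈ L, l' ≠ l → l ∩ l' ⊆ s := by
  constructor
  · rintro h l' hl' hne x ⟨hx, hx'⟩
    exact h ⟨hx, l', hl', hne, hx'⟩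
  · rintro h x ⟨hx, l', hl', hne, hx'⟩
    exact h l' hl' hne ⟨hx, hx'⟩

end IntersectionPoints

namespace Projectivization

variable {K V : Type*} [Field K] [AddCommGroup V] [Module K V]

theorem submodule_mk_le_iff {v : V} (hv : v ≠ 0) {W : Submodule K V} :
    (mk K v hv).submodule ≤ W ↔ v ∈ W := by
  rw [submodule_mk, Submodule.span_singleton_le_iff_mem]

theorem isAtom_submodule (p : ℙ K V) : IsAtom p.submodule :=
  Submodule.isAtom_iff_finrank_eq_one.2 p.finrank_submodule

theorem not_disjoint_of_submodule_le {p : ℙ K V} {A B : Submodule K V}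
    (hA : p.submodule ≤ A) (hB : p.submodule ≤ B) : ¬ Disjoint A B := fun h =>
  p.isAtom_submodule.ne_bot (disjoint_self.1 (h.mono hA hB))

theorem finrank_submodule_sup {p p' : ℙ K V} (h : p ≠ p') :
    finrank K ↥(p.submodule ⊔ p'.submodule) = 2 := by
  have hdisj : Disjoint p.submodule p'.submodule :=
    p.isAtom_submodule.disjoint_of_ne p'.isAtom_submodule (submodule_injective.ne h)
  have := Submodule.finrank_sup_add_finrank_inf_eq p.submodule p'.submodule
  rw [hdisj.eq_bot, finrank_bot, p.finrank_submodule, p'.finrank_submodule] at this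
  omega

end Projectivization

section Flats

variable {K V : Type*} [Field K] [AddCommGroup V] [Module K V]

def submoduleSpan (A : Set (ℙ K V)) : Submodule K V :=
  ⨆ x ∈ A, x.submodule

theorem le_submoduleSpan {A : Set (ℙ K V)} {x : ℙ K V} (hx : x ∈ A) :
    x.submodule ≤ submoduleSpan A :=
  le_biSup _ hx

theorem submodule_le_finset_sup {M : Finset (Set (ℙ K V))} {l : Set (ℙ K V)} {x : ℙ K V}
    (hl : l ∈ M) (hx : x ∈ l) :
    x.submodule ≤ M.sup submoduleSpan :=
  (le_submoduleSpan hx).trans (le_sup hl)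

theorem submoduleSpan_setOf_submodule_le (W : Submodule K V) :
    submoduleSpan {x : ℙ K V | x.submodule ≤ W} = W := by
  refine le_antisymm (iSup₂_le fun _ hx => hx) fun v hv => ?_
  rcases eq_or_ne v 0 with rfl | hv0
  · exact zero_mem _
  · exact le_submoduleSpan ((Projectivization.submodule_mk_le_iff hv0).2 hv)
      ((Projectivization.submodule_mk_le_iff hv0).1 le_rfl)

namespace IsFlat

variable {d : ℕ} {A l l' : Set (ℙ K V)}

theorem eq_setOf (h : IsFlat d A) : A = {x | x.submodule ≤ submoduleSpan A} := by
  obtain ⟨W, -, rfl⟩ := h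
  rw [submoduleSpan_setOf_submodule_le]

theorem mem_iff (h : IsFlat d A) {x : ℙ K V} : x ∈ A ↔ x.submodule ≤ submoduleSpan A :=
  Set.ext_iff.1 h.eq_setOf x

theorem finrank_submoduleSpan (h : IsFlat d A) : finrank K (submoduleSpan A) = d + 1 := by
  obtain ⟨W, hW, rfl⟩ := h
  rwa [submoduleSpan_setOf_submodule_le]

theorem nonempty (h : IsFlat d A) : A.Nonempty := by
  obtain ⟨W, hW, rfl⟩ := h
  have hW : W ≠ ⊥ := by
    rintro rfl
    simp at hW
  obtain ⟨v, hvW, hv0⟩ := (Submodule.ne_bot_iff W).1 hW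
  exact ⟨Projectivization.mk K v hv0, (Projectivization.submodule_mk_le_iff hv0).2 hvW⟩

variable [FiniteDimensional K V]

theorem submoduleSpan_eq_sup (h : IsFlat 1 l) {p p' : ℙ K V} (hne : p ≠ p') (hp : p ∈ l)
    (hp' : p' ∈ l) : submoduleSpan l = p.submodule ⊔ p'.submodule :=
  (Submodule.eq_of_le_of_finrank_eq (sup_le (le_submoduleSpan hp) (le_submoduleSpan hp'))
    (by rw [Projectivization.finrank_submodule_sup hne, h.finrank_submoduleSpan])).symm

theorem submoduleSpan_le_of_one_lt_encard (h : IsFlat 1 l) {U : Submodule K V}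
    (hU : 1 < {x ∈ l | x.submodule ≤ U}.encard) : submoduleSpan l ≤ U := by
  obtain ⟨p, p', ⟨hp, hpU⟩, ⟨hp', hp'U⟩, hne⟩ := Set.one_lt_encard_iff.1 hU
  rw [h.submoduleSpan_eq_sup hne hp hp']
  exact sup_le hpU hp'U

theorem encard_inter_le_one (hl : IsFlat 1 l) (hl' : IsFlat 1 l') (hne : l ≠ l') :
    (l ∩ l').encard ≤ 1 := by
  refine Set.encard_le_one_iff.2 fun p p' hp hp' => by_contra fun hpp' => hne ?_
  ext x
  rw [hl.mem_iff, hl'.mem_iff, hl.submoduleSpan_eq_sup hpp' hp.1 hp'.1,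
    hl'.submoduleSpan_eq_sup hpp' hp.2 hp'.2]

end IsFlat

theorem Submodule.exists_le_finrank_eq [FiniteDimensional K V] (U : Submodule K V) {d : ℕ}
    (h₁ : finrank K U ≤ d) (h₂ : d ≤ finrank K V) : ∃ W, U ≤ W ∧ finrank K W = d := by
  induction d, h₁ using Nat.le_induction with
  | base => exact ⟨U, le_rfl, rfl⟩
  | succ d _ ih =>
    obtain ⟨W, hUW, hW⟩ := ih (by omega)
    have hWtop : W < ⊤ := lt_top_iff_ne_top.2 fun htop => by
      rw [htop, finrank_top] at hW
      omega
    obtain ⟨v, -, hv⟩ := SetLike.exists_of_lt hWtop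
    exact ⟨W ⊔ K ∙ v, le_sup_of_le_left hUW, by rw [finrank_sup_span_singleton hv, hW]⟩

theorem exists_isFlat_superset [FiniteDimensional K V] (U : Submodule K V) {d : ℕ}
    (h₁ : finrank K U ≤ d + 1) (h₂ : d + 1 ≤ finrank K V) :
    ∃ F, IsFlat d F ∧ {x : ℙ K V | x.submodule ≤ U} ⊆ F :=
  let ⟨W, hUW, hW⟩ := U.exists_le_finrank_eq h₁ h₂
  ⟨_, ⟨W, hW, rfl⟩, fun _ hx => le_trans hx hUW⟩

end Flats

section Lines

variable {K V : Type*} [Field K] [AddCommGroup V] [Module K V] [FiniteDimensional K V]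
  {L M N S T : Finset (Set (ℙ K V))} {l : Set (ℙ K V)}

theorem encard_intersectionPoints_le_card_erase [DecidableEq (Set (ℙ K V))] (hl : IsFlat 1 l)
    (hL : ∀ l' ∈ L, IsFlat 1 l') : (intersectionPoints L l).encard ≤ (L.erase l).card :=
  calc (intersectionPoints L l).encard
      ≤ (⋃ l' ∈ L.erase l, l ∩ l').encard := Set.encard_mono fun x ⟨hx, l', hl', hne, hx'⟩ =>
        Set.mem_biUnion (mem_erase.2 ⟨hne, hl'⟩) ⟨hx, hx'⟩
    _ ≤ ∑ l' ∈ L.erase l, (l ∩ l').encard := set_encard_biUnion_le _ _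
    _ ≤ ∑ _l' ∈ L.erase l, 1 := sum_le_sum fun l' hl' =>
        hl.encard_inter_le_one (hL l' (mem_of_mem_erase hl')) (ne_of_mem_erase hl').symm
    _ = (L.erase l).card := by simp

theorem finrank_finset_sup_le (hM : ∀ l ∈ M, IsFlat 1 l) :
    finrank K ↥(M.sup submoduleSpan) ≤ 2 * M.card := by
  induction M using cons_induction with
  | empty => simp
  | cons a M ha ih =>
    rw [sup_cons, card_cons]
    have := Submodule.finrank_add_le_finrank_add_finrank (submoduleSpan a) (M.sup submoduleSpan)
    have := ih fun l hl => hM l (mem_cons_of_mem hl)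
    rw [(hM a (mem_cons_self a M)).finrank_submoduleSpan] at *
    omega

/-- For a family of lines, `finrank = 2 * card` says that their spans form a direct sum. -/
theorem disjoint_finset_sup_of_finrank_eq [DecidableEq (Set (ℙ K V))]
    (hS : ∀ l ∈ S, IsFlat 1 l) (hr : finrank K ↥(S.sup submoduleSpan) = 2 * S.card)
    (hM : M ⊆ S) (hN : N ⊆ S) (hMN : Disjoint M N) :
    Disjoint (M.sup submoduleSpan) (N.sup submoduleSpan) := by
  have hMN_S : M ∪ N ⊆ S := union_subset hM hN
  have hsplit : S.sup submoduleSpan = (M.sup submoduleSpan ⊔ N.sup submoduleSpan) ⊔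
      (S \ (M ∪ N)).sup submoduleSpan := by
    rw [← sup_union, ← sup_union, union_sdiff_of_subset hMN_S]
  have h₁ := Submodule.finrank_add_le_finrank_add_finrank
    (M.sup submoduleSpan ⊔ N.sup submoduleSpan) ((S \ (M ∪ N)).sup submoduleSpan)
  have h₂ := Submodule.finrank_sup_add_finrank_inf_eq (M.sup submoduleSpan) (N.sup submoduleSpan)
  have hM' := finrank_finset_sup_le fun l hl => hS l (hM hl)
  have hN' := finrank_finset_sup_le fun l hl => hS l (hN hl)
  have hR' := finrank_finset_sup_le (M := S \ (M ∪ N)) fun l hl => hS l (sdiff_subset hl)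
  have hcard := card_sdiff_add_card_eq_card hMN_S
  rw [card_union_of_disjoint hMN] at hcard
  rw [← hsplit, hr] at h₁
  rw [disjoint_iff, ← Submodule.finrank_eq_zero]
  omega

theorem submoduleSpan_le_sup_sdiff [DecidableEq (Set (ℙ K V))] (hL : ∀ l ∈ L, IsFlat 1 l)
    (hTL : T ⊆ L) (hl : l ∈ T) (hmeet : 2 < (intersectionPoints L l).encard)
    (hirr : ¬ submoduleSpan l ≤ (T.erase l).sup submoduleSpan) :
    submoduleSpan l ≤ (L \ T).sup submoduleSpan := by
  have hcover : intersectionPoints L l ⊆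
      {x ∈ l | x.submodule ≤ (T.erase l).sup submoduleSpan} ∪
        {x ∈ l | x.submodule ≤ (L \ T).sup submoduleSpan} := by
    rintro x ⟨hx, l', hl', hne, hx'⟩
    by_cases hl'T : l' ∈ T
    · exact Or.inl ⟨hx, submodule_le_finset_sup (mem_erase.2 ⟨hne, hl'T⟩) hx'⟩
    · exact Or.inr ⟨hx, submodule_le_finset_sup (mem_sdiff.2 ⟨hl', hl'T⟩) hx'⟩
  have hline := hL l (hTL hl)
  rcases Set.one_lt_encard_or_one_lt_encard_of_subset_union hmeet hcover with h | h
  · exact absurd (hline.submoduleSpan_le_of_one_lt_encard h) hirr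
  · exact hline.submoduleSpan_le_of_one_lt_encard h

theorem encard_intersectionPoints_le_two [DecidableEq (Set (ℙ K V))] (hL : ∀ l ∈ L, IsFlat 1 l)
    (hTL : T ⊆ L) (hT : finrank K ↥(T.sup submoduleSpan) = 2 * T.card)
    (hR : finrank K ↥((L \ T).sup submoduleSpan) = 2 * (L \ T).card) (hl : l ∈ L \ T) :
    (intersectionPoints L l).encard ≤ 2 := by
  by_contra! hmeet
  have hline := hL l (sdiff_subset hl)
  have mem_T : ∀ x ∈ l, ∀ v ∈ L, v ≠ l → x ∈ v → v ∈ T := fun x hx v hv hne hxv =>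
    by_contra fun hvT => Projectivization.not_disjoint_of_submodule_le
      (submodule_le_finset_sup (mem_singleton_self l) hx)
      (submodule_le_finset_sup (mem_singleton_self v) hxv)
      (disjoint_finset_sup_of_finrank_eq (fun l hl => hL l (sdiff_subset hl)) hR
        (singleton_subset_iff.2 hl) (singleton_subset_iff.2 (mem_sdiff.2 ⟨hv, hvT⟩))
        (disjoint_singleton.2 hne.symm))
  obtain ⟨p, hp, w, hwL, hwl, hpw⟩ :=
    Set.nonempty_of_encard_ne_zero (ne_bot_of_gt hmeet)
  have hwT := mem_T p hp w hwL hwl hpw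
  have hcover : intersectionPoints L l ⊆
      (l ∩ w) ∪ {x ∈ l | x.submodule ≤ (T.erase w).sup submoduleSpan} := by
    rintro x ⟨hx, v, hv, hne, hxv⟩
    by_cases hvw : v = w
    · exact Or.inl ⟨hx, hvw ▸ hxv⟩
    · exact Or.inr ⟨hx, submodule_le_finset_sup (mem_erase.2 ⟨hvw, mem_T x hx v hv hne hxv⟩) hxv⟩
  have hlU : submoduleSpan l ≤ (T.erase w).sup submoduleSpan := by
    rcases Set.one_lt_encard_or_one_lt_encard_of_subset_union hmeet hcover with h | h
    · exact absurd (hline.encard_inter_le_one (hL w hwL) hwl.symm) h.not_ge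
    · exact hline.submoduleSpan_le_of_one_lt_encard h
  exact Projectivization.not_disjoint_of_submodule_le ((le_submoduleSpan hp).trans hlU)
    (submodule_le_finset_sup (mem_singleton_self w) hpw)
    (disjoint_finset_sup_of_finrank_eq (fun l hl => hL l (hTL hl)) hT (erase_subset w T)
      (singleton_subset_iff.2 hwT) (by simp))

theorem finrank_finset_sup_lt_card (hL : ∀ l ∈ L, IsFlat 1 l) (hne : L.Nonempty)
    (hmeet : ∀ l ∈ L, 2 < (intersectionPoints L l).encard) :
    finrank K ↥(L.sup submoduleSpan) < L.card := by
  classical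
  by_contra! hrank
  obtain ⟨T, hTL, hTsup, hirr⟩ := L.exists_subset_sup_eq_forall_not_le_sup_erase submoduleSpan
  have hRsup : (L \ T).sup submoduleSpan = L.sup submoduleSpan := by
    refine le_antisymm (sup_mono sdiff_subset) ?_
    rw [← hTsup]
    exact Finset.sup_le fun l hl =>
      submoduleSpan_le_sup_sdiff hL hTL hl (hmeet l (hTL hl)) (hirr l hl)
  have hT := finrank_finset_sup_le fun l hl => hL l (hTL hl)
  have hR := finrank_finset_sup_le (M := L \ T) fun l hl => hL l (sdiff_subset hl)
  have hcard := card_sdiff_add_card_eq_card hTL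
  have hpos := hne.card_pos
  rw [hTsup] at hT
  rw [hRsup] at hR
  obtain ⟨l, hl⟩ : (L \ T).Nonempty := card_pos.1 (by omega)
  exact (encard_intersectionPoints_le_two hL hTL (by rw [hTsup]; omega) (by rw [hRsup]; omega)
    hl).not_gt (hmeet l (sdiff_subset hl))

theorem card_le_finrank_finset_sup {n : ℕ} (hV : finrank K V = n + 1) (hcard : L.card ≤ n + 1)
    (h₃ : 3 ≤ L.card)
    (hgen : ∀ k, 1 ≤ k → k ≤ n - 1 → ∀ M ⊆ L, M.card = k + 1 →
      ¬ ∃ F : Set (ℙ K V), IsFlat k F ∧ ∀ l ∈ M, l ⊆ F) :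
    L.card ≤ finrank K ↥(L.sup submoduleSpan) := by
  by_contra! hrank
  obtain ⟨M, hML, hM⟩ := L.exists_subset_card_eq (min_le_left L.card n)
  have hMrank := Submodule.finrank_mono (sup_mono (f := submoduleSpan) hML)
  obtain ⟨F, hF, hMF⟩ :=
    exists_isFlat_superset (M.sup submoduleSpan) (d := min L.card n - 1) (by omega) (by omega)
  exact hgen _ (by omega) (by omega) M hML (by omega)
    ⟨F, hF, fun l hl x hx => hMF (submodule_le_finset_sup hl hx)⟩

end Lines

theorem sylvester_gallai_type_general (n : ℕ) (K : Type) [Field K]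
    (L : Finset (Set (Projectivization K (Fin (n + 1) → K))))
    (hLne : L.Nonempty) (hLcard : L.card ≤ n + 1)
    (hlines : ∀ l ∈ L, IsFlat 1 l)
    (hgen : ∀ k, 1 ≤ k → k ≤ n - 1 → ∀ M ⊆ L, M.card = k + 1 →
      ¬ ∃ F : Set (Projectivization K (Fin (n + 1) → K)),
        IsFlat k F ∧ ∀ l ∈ M, l ⊆ F) :
    ∃ l ∈ L, ∃ p p' : Projectivization K (Fin (n + 1) → K), p ∈ l ∧ p' ∈ l ∧
      ∀ l' ∈ L, l' ≠ l → l ∩ l' ⊆ {p, p'} := by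
  classical
  obtain ⟨l, hl, hmeet⟩ : ∃ l ∈ L, (intersectionPoints L l).encard ≤ 2 := by
    by_contra! hmeet
    obtain ⟨l, hl⟩ := hLne
    have h₃ : 3 ≤ L.card := by
      have := (hmeet l hl).trans_le (encard_intersectionPoints_le_card_erase (hlines l hl) hlines)
      rw [card_erase_of_mem hl] at this
      norm_cast at this
      omega
    exact (finrank_finset_sup_lt_card hlines ⟨l, hl⟩ hmeet).not_ge
      (card_le_finrank_finset_sup (finrank_fin_fun K) hLcard h₃ hgen)
  obtain ⟨p, hp, p', hp', hpp'⟩ := Set.exists_subset_pair_of_encard_le_two (hlines l hl).nonempty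
    intersectionPoints_subset hmeet
  exact ⟨l, hl, p, p', hp, hp', intersectionPoints_subset_iff.1 hpp'⟩

/-- Sylvester–Gallai type property: given a nonempty set `L` of at most
`n+1` projective lines of `F_qPⁿ` in general position (for `1 ≤ k ≤ n-1`, no `k+1` of
them lie in a common `k`-flat), there is a line `l ∈ L` and two points `p, p' ∈ l` such
that every other line of `L` meets `l` only inside `{p, p'}`. -/
theorem sylvester_gallai_type (q n : ℕ) (hn : 1 ≤ n) (K : Type) [Field K] [Fintype K]
    (hq : Fintype.card K = q)
    (L : Finset (Set (Projectivization K (Fin (n + 1) → K))))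
    (hLne : L.Nonempty) (hLcard : L.card ≤ n + 1)
    (hlines : ∀ l ∈ L, IsFlat 1 l)
    (hgen : ∀ k, 1 ≤ k → k ≤ n - 1 → ∀ M ⊆ L, M.card = k + 1 →
      ¬ ∃ F : Set (Projectivization K (Fin (n + 1) → K)),
        IsFlat k F ∧ ∀ l ∈ M, l ⊆ F) :
    ∃ l ∈ L, ∃ p p' : Projectivization K (Fin (n + 1) → K), p ∈ l ∧ p' ∈ l ∧
      ∀ l' ∈ L, l' ≠ l → l ∩ l' ⊆ {p, p'} :=
  sylvester_gallai_type_general n K L hLne hLcard hlines hgen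
end

section
/- Let q be a prime power and n ≥ 1. The number of dependent n-tuples in (F_qP^n)^n is at most |F_qP^n|^n / (q(q−1)). -/
/-!
If `(p₀, …, p_{n-1})` is dependent, some `pᵢ` lies in the span of `p₀, …, p_{i-1}`, a projective
subspace of dimension `< i` with at most `1 + q + ⋯ + q^{i-1}` points. The other `n - 1`
coordinates being arbitrary, the dependent tuples number at most `N^{n-1} ∑_{i<n} (q^i - 1)/(q - 1)`
with `N = 1 + q + ⋯ + q^n`, and `q ∑_{i<n} (q^i - 1) ≤ q + ⋯ + q^n < N`.
-/

open scoped LinearAlgebra.Projectivization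
open Finset Submodule

theorem exists_mem_span_image_Iio_of_not_linearIndependent {K V : Type*} [DivisionRing K]
    [AddCommGroup V] [Module K V] :
    ∀ {n : ℕ} {v : Fin n → V}, ¬LinearIndependent K v → ∃ i, v i ∈ span K (v '' Set.Iio i)
  | 0, _, h => absurd linearIndependent_empty_type h
  | n + 1, v, h => by
    rw [linearIndependent_finSucc', not_and_or, not_not] at h
    rcases h with hinit | hlast
    · obtain ⟨i, hi⟩ := exists_mem_span_image_Iio_of_not_linearIndependent hinit
      refine ⟨i.castSucc, ?_⟩
      rwa [← Fin.image_castSucc_Iio, Set.image_image]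
    · refine ⟨Fin.last n, ?_⟩
      have hIio : Set.Iio (Fin.last n) = Set.range Fin.castSucc := by
        ext j; simp [Fin.range_castSucc, Fin.lt_def]
      rwa [hIio, ← Set.range_comp]

theorem ncard_setOf_apply_mem_le {ι α : Type*} [Fintype ι] [DecidableEq ι] [Finite α]
    (i : ι) (F : (ι → α) → Set α) (hF : ∀ t a, F (Function.update t i a) = F t) {b : ℕ}
    (hb : ∀ t, (F t).ncard ≤ b) :
    {t | t i ∈ F t}.ncard ≤ Nat.card α ^ (Fintype.card ι - 1) * b := by
  classical
  have := Fintype.ofFinite α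
  let restrict : (ι → α) → ({j // j ≠ i} → α) := fun t j => t j
  have hupdate : ∀ s t, restrict s = restrict t → s = Function.update t i (s i) := by
    intro s t hst
    funext j
    by_cases hj : j = i
    · subst hj; simp
    · simpa [hj] using congrFun hst ⟨j, hj⟩
  have hfiber : ∀ r, #{t ∈ {t | t i ∈ F t}.toFinset | restrict t = r} ≤ b := by
    intro r
    rcases ({t ∈ {t | t i ∈ F t}.toFinset | restrict t = r}).eq_empty_or_nonempty
      with hempty | ⟨t₀, ht₀⟩
    · simp [hempty]
    have hfiber_eq : ∀ t ∈ {t ∈ {t | t i ∈ F t}.toFinset | restrict t = r},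
        t = Function.update t₀ i (t i) := fun t ht =>
      hupdate t t₀ ((mem_filter.1 ht).2.trans (mem_filter.1 ht₀).2.symm)
    calc #{t ∈ {t | t i ∈ F t}.toFinset | restrict t = r} ≤ #(F t₀).toFinset := by
          refine card_le_card_of_injOn (fun t => t i) (fun t ht => ?_) fun s hs t ht hst => ?_
          · have hFt : F t = F t₀ := by rw [hfiber_eq t ht, hF]
            have hti : t i ∈ F t := by simpa using (mem_filter.1 ht).1
            simpa [hFt] using hti
          · rw [hfiber_eq s hs, hfiber_eq t ht]
            exact congrArg _ hst
      _ ≤ b := (Set.ncard_eq_toFinset_card' _).symm.trans_le (hb t₀)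
  calc {t | t i ∈ F t}.ncard = #{t | t i ∈ F t}.toFinset := Set.ncard_eq_toFinset_card' _
    _ ≤ b * #(univ : Finset ({j // j ≠ i} → α)) :=
        card_le_mul_card_image_of_maps_to (fun _ _ => mem_univ _) b fun r _ => hfiber r
    _ = Nat.card α ^ (Fintype.card ι - 1) * b := by
        simp [mul_comm]

namespace Submodule

variable {K V : Type*} [Field K] [AddCommGroup V] [Module K V]

theorem ncard_projectivization (W : Submodule K V) :
    (W.projectivization : Set (ℙ K V)).ncard = Nat.card (ℙ K W) := by
  let ι : ℙ K W → ℙ K V := Projectivization.map W.subtype W.injective_subtype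
  have hrange : (W.projectivization : Set (ℙ K V)) = Set.range ι := by
    ext p
    induction p using Projectivization.ind with | h v hv => ?_
    simp only [SetLike.mem_coe, mk_mem_projectivization_iff, Set.mem_range]
    constructor
    · intro hvW
      exact ⟨Projectivization.mk K ⟨v, hvW⟩ (by simpa using hv), Projectivization.map_mk ..⟩
    · rintro ⟨p, hp⟩
      induction p using Projectivization.ind with | h w hw => ?_
      rw [show ι _ = _ from Projectivization.map_mk .., eq_comm,
        Projectivization.mk_eq_mk_iff] at hp
      obtain ⟨a, rfl⟩ := hp
      exact W.smul_of_tower_mem a w.2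
  rw [hrange, Set.ncard_range_of_injective (Projectivization.map_injective _ _)]

theorem ncard_projectivization_span_le [Finite K] {ι : Type*} (s : Finset ι) (v : ι → V) :
    ((span K (v '' s)).projectivization : Set (ℙ K V)).ncard ≤
      ∑ j ∈ range #s, Nat.card K ^ j := by
  classical
  rw [ncard_projectivization, Projectivization.card_of_finrank K _ rfl]
  refine sum_le_sum_of_subset (range_mono ?_)
  calc Module.finrank K (span K (v '' s)) ≤ #(s.image v) := by
        have h := finrank_span_finset_le_card (R := K) (s.image v)
        rwa [Set.finrank, coe_image] at h
    _ ≤ #s := card_image_le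

end Submodule

namespace Projectivization

variable {K V : Type*} [Field K] [AddCommGroup V] [Module K V]

theorem Dependent.exists_mem_projectivization_span {n : ℕ} {t : Fin n → ℙ K V}
    (h : Dependent t) :
    ∃ i, t i ∈ (span K ((Projectivization.rep ∘ t) '' Set.Iio i)).projectivization := by
  obtain ⟨i, hi⟩ := exists_mem_span_image_Iio_of_not_linearIndependent (dependent_iff.1 h)
  refine ⟨i, ?_⟩
  rw [← (t i).mk_rep]
  exact (mk_mem_projectivization_iff _ _).2 hi

theorem ncard_dependent_le [Finite K] [Finite V] (n : ℕ) :
    {t : Fin n → ℙ K V | Dependent t}.ncard ≤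
      Nat.card (ℙ K V) ^ (n - 1) * ∑ i ∈ range n, ∑ j ∈ range i, Nat.card K ^ j := by
  let S : Fin n → Set (Fin n → ℙ K V) := fun i =>
    {t | t i ∈ (span K ((Projectivization.rep ∘ t) '' Set.Iio i)).projectivization}
  have hS : ∀ i, (S i).ncard ≤ Nat.card (ℙ K V) ^ (n - 1) * ∑ j ∈ range i, Nat.card K ^ j := by
    intro i
    refine (ncard_setOf_apply_mem_le i _ (b := ∑ j ∈ range i, Nat.card K ^ j) (fun t a => ?_)
      fun t => ?_).trans_eq (by simp)
    · congr 3
      exact Set.image_congr fun j hj => by simp [Function.update_of_ne (Set.mem_Iio.1 hj).ne]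
    · simpa using ncard_projectivization_span_le (Iio i) (Projectivization.rep ∘ t)
  calc {t : Fin n → ℙ K V | Dependent t}.ncard ≤ (⋃ i, S i).ncard :=
        Set.ncard_le_ncard (fun t ht => Set.mem_iUnion.2 ht.exists_mem_projectivization_span)
    _ ≤ ∑ i, (S i).ncard := Set.ncard_iUnion_le_of_fintype S
    _ ≤ ∑ i : Fin n, Nat.card (ℙ K V) ^ (n - 1) * ∑ j ∈ range i, Nat.card K ^ j :=
        sum_le_sum fun i _ => hS i
    _ = _ := by rw [← mul_sum, Fin.sum_univ_eq_sum_range (fun i => ∑ j ∈ range i, Nat.card K ^ j)]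

end Projectivization

theorem mul_sub_one_mul_sum_range_geom_sum_le {R : Type*} [CommRing R] [LinearOrder R]
    [IsStrictOrderedRing R] {x : R} (hx : 1 ≤ x) (n : ℕ) :
    x * (x - 1) * ∑ i ∈ range n, ∑ j ∈ range i, x ^ j ≤ ∑ j ∈ range (n + 1), x ^ j := by
  have hgeom : ∀ i, (∑ j ∈ range i, x ^ j) * (x - 1) = x ^ i - 1 := fun i => geom_sum_mul x i
  calc x * (x - 1) * ∑ i ∈ range n, ∑ j ∈ range i, x ^ j = ∑ i ∈ range n, x * (x ^ i - 1) := by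
        rw [mul_sum]; exact sum_congr rfl fun i _ => by rw [← hgeom]; ring
    _ ≤ ∑ i ∈ range n, x ^ (i + 1) :=
        sum_le_sum fun i _ => by rw [pow_succ', mul_sub, mul_one]; linarith
    _ ≤ ∑ j ∈ range (n + 1), x ^ j := by
        rw [sum_range_succ' _ n]; exact le_add_of_nonneg_right (by simp)

/-- the number of dependent `n`-tuples in `(F_qPⁿ)ⁿ` is at most
`|F_qPⁿ|ⁿ / (q(q-1))`. -/
theorem dependent_tuples_upper_bound (q n : ℕ) (hn : 1 ≤ n)
    (K : Type) [Field K] [Fintype K] (hq : Fintype.card K = q) :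
    (Set.ncard {t : Fin n → Projectivization K (Fin (n + 1) → K) |
        Projectivization.Dependent t} : ℝ) ≤
      (Nat.card (Projectivization K (Fin (n + 1) → K)) : ℝ) ^ n /
        ((q : ℝ) * ((q : ℝ) - 1)) := by
  have hqK : Nat.card K = q := Nat.card_eq_fintype_card.trans hq
  have hq2 : (2 : ℝ) ≤ q := by rw [← hq]; exact_mod_cast Fintype.one_lt_card
  have hN : (Nat.card (ℙ K (Fin (n + 1) → K)) : ℝ) = ∑ j ∈ range (n + 1), (q : ℝ) ^ j := by
    rw [Projectivization.card_of_finrank K _ (Module.finrank_fin_fun K), hqK]; push_cast; rfl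
  have hdep := Projectivization.ncard_dependent_le (K := K) (V := Fin (n + 1) → K) n
  rw [hqK] at hdep
  set N := Nat.card (ℙ K (Fin (n + 1) → K))
  have hq_pos : (0 : ℝ) < q * (q - 1) := by nlinarith
  rw [le_div_iff₀ hq_pos]
  calc _ ≤ (N : ℝ) ^ (n - 1) * (∑ i ∈ range n, ∑ j ∈ range i, (q : ℝ) ^ j) * (q * (q - 1)) :=
        mul_le_mul_of_nonneg_right (by exact_mod_cast hdep) hq_pos.le
    _ = (N : ℝ) ^ (n - 1) * ((q * (q - 1)) * ∑ i ∈ range n, ∑ j ∈ range i, (q : ℝ) ^ j) := by ring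
    _ ≤ (N : ℝ) ^ (n - 1) * N := by
        rw [hN]; gcongr; exact mul_sub_one_mul_sum_range_geom_sum_le (by linarith) n
    _ = (N : ℝ) ^ n := pow_sub_one_mul (by omega) _
end

section
/- Let X_1, …, X_n be sets and let A, B^1, …, B^h be product subsets of X_1 × ⋯ × X_n (i.e., each is a product of n subsets, one per coordinate). Then the set A \ (B^1 ∪ ⋯ ∪ B^h) can be partitioned into at most n^h product subsets of X_1 × ⋯ × X_n. -/
/-!
Order the coordinates. A point of `∏ Aⱼ` lies outside `∏ Bⱼ` iff there is a first coordinate `i`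
with `xᵢ ∉ Bᵢ`; sorting the points by this `i` partitions `∏ A \ ∏ B` into `n` boxes. Removing
`B¹, …, Bʰ` one after the other, each box of the current partition splits into at most `n` boxes,
which gives `nʰ` boxes in total.
-/

open Set Function

section BoxPartition

variable {ι : Type*} {X : ι → Type*}

def IsBoxPartition {κ : Type*} (C : κ → ∀ i, Set (X i)) (S : Set (∀ i, X i)) : Prop :=
  Pairwise (Disjoint on fun k => univ.pi (C k)) ∧ ⋃ k, univ.pi (C k) = S

namespace IsBoxPartition

variable {κ κ' : Type*} {C : κ → ∀ i, Set (X i)} {S : Set (∀ i, X i)}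

lemma comp_equiv (hC : IsBoxPartition C S) (e : κ' ≃ κ) : IsBoxPartition (C ∘ e) S :=
  ⟨fun _ _ hne => hC.1 (e.injective.ne hne),
    hC.2 ▸ e.surjective.iUnion_comp fun k => univ.pi (C k)⟩

lemma subset (hC : IsBoxPartition C S) (k : κ) : univ.pi (C k) ⊆ S :=
  hC.2 ▸ subset_iUnion (fun k => univ.pi (C k)) k

lemma prod_diff {T : Set (∀ i, X i)} (hC : IsBoxPartition C S) {D : κ → κ' → ∀ i, Set (X i)}
    (hD : ∀ k, IsBoxPartition (D k) (univ.pi (C k) \ T)) :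
    IsBoxPartition (fun p : κ × κ' => D p.1 p.2) (S \ T) := by
  refine ⟨?_, ?_⟩
  · rintro ⟨k, l⟩ ⟨k', l'⟩ hne
    by_cases hk : k = k'
    · subst hk
      exact (hD k).1 fun hl => hne (congrArg _ hl)
    · exact (hC.1 hk).mono (((hD k).subset l).trans sdiff_subset)
        (((hD k').subset l').trans sdiff_subset)
  · rw [iUnion_prod', ← hC.2, iUnion_sdiff]
    exact iUnion_congr fun k => (hD k).2

end IsBoxPartition

section FirstEscape

variable [LinearOrder ι] (A B : ∀ i, Set (X i))

/-- The box of points of `∏ A` whose first coordinate outside `B` is the `i`-th one. -/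
def firstEscapeBox (i : ι) (j : ι) : Set (X j) :=
  if j < i then A j ∩ B j else if j = i then A j \ B j else A j

lemma firstEscapeBox_subset (i j : ι) : firstEscapeBox A B i j ⊆ A j := by
  unfold firstEscapeBox
  split_ifs
  exacts [inter_subset_left, sdiff_subset, subset_rfl]

lemma pairwise_disjoint_firstEscapeBox :
    Pairwise (Disjoint on fun i => univ.pi (firstEscapeBox A B i)) := by
  refine (pairwise_disjoint_on _).2 fun i i' hii' => disjoint_left.2 fun x hx hx' => ?_
  have hxi := hx i (mem_univ i)
  have hxi' := hx' i (mem_univ i)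
  simp only [firstEscapeBox, lt_irrefl, if_true, if_false] at hxi
  simp only [firstEscapeBox, if_pos hii'] at hxi'
  exact hxi.2 hxi'.2

lemma isBoxPartition_firstEscapeBox [WellFoundedLT ι] :
    IsBoxPartition (firstEscapeBox A B) (univ.pi A \ univ.pi B) := by
  refine ⟨pairwise_disjoint_firstEscapeBox A B, Subset.antisymm ?_ ?_⟩
  · refine iUnion_subset fun i => subset_sdiff.2 ⟨pi_mono fun j _ => firstEscapeBox_subset A B i j,
      disjoint_left.2 fun x hx hxB => ?_⟩
    have hxi := hx i (mem_univ i)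
    simp only [firstEscapeBox, lt_irrefl, if_true, if_false] at hxi
    exact hxi.2 (hxB i (mem_univ i))
  · rintro x ⟨hxA, hxB⟩
    have hesc : {j | x j ∉ B j}.Nonempty := by
      simpa [Set.Nonempty, mem_univ_pi] using hxB
    obtain ⟨i, hi, hmin⟩ := wellFounded_lt.has_min _ hesc
    refine mem_iUnion.2 ⟨i, fun j _ => ?_⟩
    unfold firstEscapeBox
    split_ifs with hji hji'
    · exact ⟨hxA j trivial, not_not.1 fun hxj => hmin j hxj hji⟩
    · exact hji' ▸ ⟨hxA i trivial, hi⟩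
    · exact hxA j trivial

end FirstEscape

lemma exists_isBoxPartition_pi_diff_iUnion_pi [LinearOrder ι] [WellFoundedLT ι] (h : ℕ)
    (A : ∀ i, Set (X i)) (B : Fin h → ∀ i, Set (X i)) :
    ∃ C : (Fin h → ι) → ∀ i, Set (X i),
      IsBoxPartition C (univ.pi A \ ⋃ t, univ.pi (B t)) := by
  induction h generalizing A with
  | zero => exact ⟨fun _ => A, by simp [IsBoxPartition, Subsingleton.pairwise, iUnion_const]⟩
  | succ h ih =>
    choose D hD using fun i => ih (firstEscapeBox A (B 0) i) (fun t => B t.succ)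
    have hsplit : ⋃ t, univ.pi (B t) = univ.pi (B 0) ∪ ⋃ t : Fin h, univ.pi (B t.succ) := by
      ext x
      simp [Fin.exists_iff_succ]
    refine ⟨fun c => D (c 0) (Fin.tail c), ?_⟩
    rw [hsplit, ← sdiff_sdiff]
    exact ((isBoxPartition_firstEscapeBox A (B 0)).prod_diff hD).comp_equiv
      (Fin.consEquiv fun _ => ι).symm

end BoxPartition

/-- if `A, B¹, …, Bʰ` are product subsets of `X₁ × ⋯ × Xₙ`, then
`A \ (B¹ ∪ ⋯ ∪ Bʰ)` can be partitioned into at most `nʰ` product subsets. -/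
theorem product_minus_products_partition (n h : ℕ) (X : Fin n → Type*)
    (A : ∀ i, Set (X i)) (B : Fin h → ∀ i, Set (X i)) :
    ∃ (N : ℕ) (C : Fin N → ∀ i, Set (X i)),
      N ≤ n ^ h ∧
      (∀ s t, s ≠ t → Disjoint (Set.univ.pi (C s)) (Set.univ.pi (C t))) ∧
      (⋃ s, Set.univ.pi (C s)) = Set.univ.pi A \ ⋃ t, Set.univ.pi (B t) := by
  obtain ⟨C, hC⟩ := exists_isBoxPartition_pi_diff_iUnion_pi h A B
  obtain ⟨hdisj, hunion⟩ := hC.comp_equiv finFunctionFinEquiv.symm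
  exact ⟨n ^ h, _, le_rfl, fun s t hst => hdisj hst, hunion⟩
end

section
/- Let q be a prime power, let F and S be flats in F_qP^n, and let F' ⊆ F be a flat. Consider the equivalence relation on F \ S defined by p ~ p' iff span((F ∩ S) ∪ {p}) = span((F ∩ S) ∪ {p'}). Then all equivalence classes C of this relation having nonempty intersection with F' have the same intersection size |C ∩ F'|. -/
/-- A flat in a projective space (of any dimension, possibly empty): the set of
projective points whose representing line lies in a fixed linear subspace. -/
def IsFlatSet {K V : Type*} [Field K] [AddCommGroup V] [Module K V]
    (A : Set (Projectivization K V)) : Prop :=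
  ∃ W : Submodule K V, A = {x : Projectivization K V | x.submodule ≤ W}

/-- The projective span of a set of projective points: the smallest flat containing it,
i.e. the points inside the linear span of representatives. -/
def projSpan {K V : Type*} [Field K] [AddCommGroup V] [Module K V]
    (T : Set (Projectivization K V)) : Set (Projectivization K V) :=
  {x : Projectivization K V |
    x.submodule ≤ Submodule.span K (Projectivization.rep '' T)}

/-!
Let `M` be the span of `F ∩ S`. Since `S` is a flat, a point of `F` lies outside `S` exactly
when it lies outside `M`, and for such points `p ~ p'` says `M ⊔ K p = M ⊔ K p'`. So if a class
meets `F'` in a point `x`, its trace on `F'` consists of the points of `(M ⊓ F') ⊔ K x` not in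
`M ⊓ F'` (modular law, as `x ∈ F'`). This affine chart is in bijection with the vectors of
`M ⊓ F'` via `u ↦ [u + x]`, so its size does not depend on the class.
-/

open Projectivization
open scoped LinearAlgebra.Projectivization

section

variable {K V : Type*} [Field K] [AddCommGroup V] [Module K V]

namespace Submodule

theorem mem_sup_span_singleton_iff {M : Submodule K V} {x v : V} :
    x ∈ M ⊔ K ∙ v ↔ ∃ a : K, ∃ m ∈ M, x = a • v + m := by
  rw [sup_comm, ← M.span_eq, ← span_insert, mem_span_insert, M.span_eq]

theorem sup_span_singleton_eq_of_mem {M : Submodule K V} {a b : V}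
    (hab : a ∈ M ⊔ K ∙ b) (ha : a ∉ M) : M ⊔ K ∙ a = M ⊔ K ∙ b := by
  have hba : b ∈ M ⊔ K ∙ a := by
    rw [sup_comm, ← M.span_eq, ← span_insert] at hab ⊢
    exact mem_span_insert_exchange hab (by rwa [M.span_eq])
  apply le_antisymm <;> refine sup_le le_sup_left ?_ <;> rwa [span_singleton_le_iff_mem]

end Submodule

namespace Projectivization

theorem submodule_le_iff_rep_mem (x : ℙ K V) (W : Submodule K V) :
    x.submodule ≤ W ↔ x.rep ∈ W := by
  rw [submodule_eq, Submodule.span_singleton_le_iff_mem]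

theorem rep_mk_mem_iff {w : V} (hw : w ≠ 0) (W : Submodule K V) :
    (mk K w hw).rep ∈ W ↔ w ∈ W := by
  rw [← submodule_le_iff_rep_mem, submodule_mk, Submodule.span_singleton_le_iff_mem]

theorem card_setOf_rep_mem_sup_not_mem (U : Submodule K V) {v : V} (hv : v ∉ U) :
    Nat.card {y : ℙ K V | y.rep ∈ U ⊔ K ∙ v ∧ y.rep ∉ U} = Nat.card U := by
  have hne (u : U) : (u : V) + v ≠ 0 := fun h ↦
    hv (by rw [eq_neg_of_add_eq_zero_right h]; exact U.neg_mem u.2)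
  have hscalar {a : K} {m : V} (hm : m ∈ U) (h : a • v + m ∈ U) : a = 0 := by
    by_contra ha
    exact hv ((U.smul_mem_iff ha).mp ((U.add_mem_iff_left hm).mp h))
  have hmem (u : U) : (mk K ((u : V) + v) (hne u)).rep ∈ U ⊔ K ∙ v ∧
      (mk K ((u : V) + v) (hne u)).rep ∉ U := by
    rw [rep_mk_mem_iff, rep_mk_mem_iff]
    refine ⟨add_mem (Submodule.mem_sup_left u.2)
      (Submodule.mem_sup_right (Submodule.mem_span_singleton_self v)), fun h ↦ ?_⟩
    simpa using hscalar (a := 1) u.2 (by rwa [one_smul, add_comm])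
  refine (Nat.card_eq_of_bijective (fun u : U ↦ ⟨_, hmem u⟩) ⟨?_, ?_⟩).symm
  · intro u u' h
    obtain ⟨a, ha⟩ := (mk_eq_mk_iff' K _ _ _ _).mp (congrArg Subtype.val h)
    have h0 : (a - 1) • v + (a • (u' : V) - u) = 0 := by
      rw [← sub_eq_zero.mpr ha]
      module
    have ha1 : a - 1 = 0 := hscalar (U.sub_mem (U.smul_mem a u'.2) u.2) (h0 ▸ U.zero_mem)
    rw [sub_eq_zero.mp ha1, one_smul, add_left_inj] at ha
    exact Subtype.ext ha.symm
  · rintro ⟨y, hyv, hyU⟩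
    obtain ⟨a, m, hm, hy⟩ := Submodule.mem_sup_span_singleton_iff.mp hyv
    have ha : a ≠ 0 := by
      rintro rfl
      exact hyU (by rwa [hy, zero_smul, zero_add])
    refine ⟨⟨a⁻¹ • m, U.smul_mem _ hm⟩, Subtype.ext ?_⟩
    change mk K (a⁻¹ • m + v) _ = y
    conv_rhs => rw [← mk_rep y]
    rw [mk_eq_mk_iff']
    exact ⟨a⁻¹, by rw [hy, smul_add, smul_smul, inv_mul_cancel₀ ha, one_smul, add_comm]⟩

end Projectivization

theorem projSpan_union_singleton (A : Set (ℙ K V)) (p : ℙ K V) :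
    projSpan (A ∪ {p}) =
      {x | x.rep ∈ Submodule.span K (Projectivization.rep '' A) ⊔ K ∙ p.rep} := by
  ext x
  rw [projSpan, Set.image_union, Set.image_singleton, Submodule.span_union,
    Set.mem_ofPred_eq, submodule_le_iff_rep_mem, Set.mem_ofPred_eq]

theorem projSpan_union_singleton_eq_iff {A : Set (ℙ K V)} {p p' : ℙ K V}
    (hp' : p'.rep ∉ Submodule.span K (Projectivization.rep '' A)) :
    projSpan (A ∪ {p'}) = projSpan (A ∪ {p}) ↔
      p'.rep ∈ Submodule.span K (Projectivization.rep '' A) ⊔ K ∙ p.rep := by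
  rw [projSpan_union_singleton, projSpan_union_singleton]
  refine ⟨fun h ↦ ?_, fun h ↦ by rw [Submodule.sup_span_singleton_eq_of_mem h hp']⟩
  have hp'_mem :
      p' ∈ {x : ℙ K V | x.rep ∈ Submodule.span K (Projectivization.rep '' A) ⊔ K ∙ p'.rep} :=
    Submodule.mem_sup_right (Submodule.mem_span_singleton_self _)
  rwa [h] at hp'_mem

theorem rep_mem_span_inter_iff {F S : Set (ℙ K V)} (hS : IsFlatSet S) {y : ℙ K V}
    (hy : y ∈ F) :
    y.rep ∈ Submodule.span K (Projectivization.rep '' (F ∩ S)) ↔ y ∈ S := by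
  obtain ⟨W, rfl⟩ := hS
  refine ⟨fun h ↦ ?_, fun h ↦ Submodule.subset_span ⟨y, ⟨hy, h⟩, rfl⟩⟩
  rw [Set.mem_ofPred_eq, submodule_le_iff_rep_mem]
  refine Submodule.span_le.mpr ?_ h
  rintro _ ⟨z, ⟨-, hz⟩, rfl⟩
  exact (submodule_le_iff_rep_mem z W).mp hz

def spanClass (F S : Set (ℙ K V)) (p : ℙ K V) : Set (ℙ K V) :=
  {p' ∈ F \ S | projSpan ((F ∩ S) ∪ {p'}) = projSpan ((F ∩ S) ∪ {p})}

theorem mem_spanClass_iff {F S : Set (ℙ K V)} (hS : IsFlatSet S) {p y : ℙ K V} :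
    y ∈ spanClass F S p ↔ y ∈ F ∧ y.rep ∉ Submodule.span K (Projectivization.rep '' (F ∩ S)) ∧
      y.rep ∈ Submodule.span K (Projectivization.rep '' (F ∩ S)) ⊔ K ∙ p.rep := by
  refine ⟨fun ⟨⟨hyF, hyS⟩, h⟩ ↦ ?_, fun ⟨hyF, hyM, h⟩ ↦ ?_⟩
  · rw [← rep_mem_span_inter_iff hS hyF] at hyS
    exact ⟨hyF, hyS, (projSpan_union_singleton_eq_iff hyS).mp h⟩
  · exact ⟨⟨hyF, (rep_mem_span_inter_iff hS hyF).not.mp hyM⟩,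
      (projSpan_union_singleton_eq_iff hyM).mpr h⟩

theorem spanClass_inter_eq {F S : Set (ℙ K V)} (hS : IsFlatSet S) {W : Submodule K V}
    (hWF : {x : ℙ K V | x.submodule ≤ W} ⊆ F) {p x : ℙ K V}
    (hx : x ∈ spanClass F S p ∩ {x | x.submodule ≤ W}) :
    spanClass F S p ∩ {x | x.submodule ≤ W} =
      {y | y.rep ∈ Submodule.span K (Projectivization.rep '' (F ∩ S)) ⊓ W ⊔ K ∙ x.rep ∧
        y.rep ∉ Submodule.span K (Projectivization.rep '' (F ∩ S)) ⊓ W} := by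
  set M := Submodule.span K (Projectivization.rep '' (F ∩ S))
  obtain ⟨hxC, hxW⟩ := hx
  obtain ⟨-, hxM, hxp⟩ := (mem_spanClass_iff hS).mp hxC
  have hxW : K ∙ x.rep ≤ W := (submodule_eq x).symm.trans_le hxW
  have hsup : M ⊔ K ∙ x.rep = M ⊔ K ∙ p.rep := Submodule.sup_span_singleton_eq_of_mem hxp hxM
  have hmod : M ⊓ W ⊔ K ∙ x.rep = (M ⊔ K ∙ x.rep) ⊓ W := by
    rw [inf_comm, inf_sup_assoc_of_le M hxW, inf_comm]
  ext y
  have hyF : y.rep ∈ W → y ∈ F := fun hy ↦ hWF ((submodule_le_iff_rep_mem y W).mpr hy)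
  simp only [Set.mem_inter_iff, mem_spanClass_iff hS, Set.mem_ofPred_eq, submodule_le_iff_rep_mem,
    hmod, hsup, Submodule.mem_inf]
  tauto

theorem ncard_spanClass_inter {F S : Set (ℙ K V)} (hS : IsFlatSet S) {W : Submodule K V}
    (hWF : {x : ℙ K V | x.submodule ≤ W} ⊆ F) {p : ℙ K V}
    (hne : (spanClass F S p ∩ {x | x.submodule ≤ W}).Nonempty) :
    (spanClass F S p ∩ {x | x.submodule ≤ W}).ncard =
      Nat.card ↥(Submodule.span K (Projectivization.rep '' (F ∩ S)) ⊓ W) := by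
  obtain ⟨x, hx⟩ := hne
  have hxM : x.rep ∉ Submodule.span K (Projectivization.rep '' (F ∩ S)) ⊓ W :=
    fun h ↦ ((mem_spanClass_iff hS).mp hx.1).2.1 h.1
  rw [spanClass_inter_eq hS hWF hx, ← Nat.card_coe_set_eq, card_setOf_rep_mem_sup_not_mem _ hxM]

end

theorem class_intersection_size_constant_general (n : ℕ)
    (K : Type) [Field K]
    (F S F' : Set (Projectivization K (Fin (n + 1) → K)))
    (hS : IsFlatSet S) (hF' : IsFlatSet F') (hF'F : F' ⊆ F)
    (C₁ C₂ : Set (Projectivization K (Fin (n + 1) → K)))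
    (hC₁ : ∃ p ∈ F \ S, C₁ =
      {p' ∈ F \ S | projSpan ((F ∩ S) ∪ {p'}) = projSpan ((F ∩ S) ∪ {p})})
    (hC₂ : ∃ p ∈ F \ S, C₂ =
      {p' ∈ F \ S | projSpan ((F ∩ S) ∪ {p'}) = projSpan ((F ∩ S) ∪ {p})})
    (h₁ : (C₁ ∩ F').Nonempty) (h₂ : (C₂ ∩ F').Nonempty) :
    (C₁ ∩ F').ncard = (C₂ ∩ F').ncard := by
  obtain ⟨W, rfl⟩ := hF'
  obtain ⟨p₁, -, rfl⟩ := hC₁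
  obtain ⟨p₂, -, rfl⟩ := hC₂
  exact (ncard_spanClass_inter (p := p₁) hS hF'F h₁).trans
    (ncard_spanClass_inter (p := p₂) hS hF'F h₂).symm

/-- let `F, S` be flats in `F_qPⁿ` and `F' ⊆ F` a flat.  Consider the
equivalence relation on `F \ S` given by `p ~ p'` iff
`span((F ∩ S) ∪ {p}) = span((F ∩ S) ∪ {p'})`.  Then all equivalence classes meeting `F'`
have the same intersection size with `F'`. -/
theorem class_intersection_size_constant (q n : ℕ)
    (K : Type) [Field K] [Fintype K] (hq : Fintype.card K = q)
    (F S F' : Set (Projectivization K (Fin (n + 1) → K)))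
    (hF : IsFlatSet F) (hS : IsFlatSet S) (hF' : IsFlatSet F') (hF'F : F' ⊆ F)
    (C₁ C₂ : Set (Projectivization K (Fin (n + 1) → K)))
    (hC₁ : ∃ p ∈ F \ S, C₁ =
      {p' ∈ F \ S | projSpan ((F ∩ S) ∪ {p'}) = projSpan ((F ∩ S) ∪ {p})})
    (hC₂ : ∃ p ∈ F \ S, C₂ =
      {p' ∈ F \ S | projSpan ((F ∩ S) ∪ {p'}) = projSpan ((F ∩ S) ∪ {p})})
    (h₁ : (C₁ ∩ F').Nonempty) (h₂ : (C₂ ∩ F').Nonempty) :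
    (C₁ ∩ F').ncard = (C₂ ∩ F').ncard :=
  class_intersection_size_constant_general n K F S F' hS hF' hF'F C₁ C₂ hC₁ hC₂ h₁ h₂
end

section
/- Let q be a prime power, n ≥ 1, and let A be an almost-flat of dimension d in F_qP^n (i.e., A = F_d or A = F_d \ F_{d''} for a d-flat F_d and a subflat F_{d''} ⊊ F_d). Then for every d' with 0 < d' ≤ d, the set A can be partitioned into almost-flats of dimension d'. -/
/-- An almost-flat of dimension `k`: either a `k`-flat, or a `k`-flat minus a flat of
dimension at most `k-1` contained in it. -/
def IsAlmostFlat {K V : Type*} [Field K] [AddCommGroup V] [Module K V]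
    (k : ℕ) (A : Set (Projectivization K V)) : Prop :=
  IsFlat k A ∨ ∃ (F F' : Set (Projectivization K V)) (d : ℕ),
    IsFlat k F ∧ IsFlat d F' ∧ d + 1 ≤ k ∧ F' ⊆ F ∧ A = F \ F'

/-!
In terms of subspaces, an almost-flat of dimension `k` is `P(W) \ P(U)` with `U ≤ W`,
`dim W = k + 1` and `dim U ≤ k`. To cut it into almost-flats of dimension `k' ≤ k`, refine
`U ≤ W` to a chain of subspaces, each of codimension one in the next; if `dim U ≤ k'`, let the
chain jump first to a subspace of dimension `k' + 1`, so that its first layer is itself an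
almost-flat of dimension `k'`. Every other layer `P(H + Kv) \ P(H)` is an affine space of
dimension `dim H ≥ k'`, partitioned by its parallel affine subspaces of dimension `k'`: for a
fixed `D ≤ H` with `dim D = k'`, these are the sets `P(D + K(w + v)) \ P(D)` for `w ∈ H`.
-/

open Module Submodule

section

variable {K V : Type*} [Field K] [AddCommGroup V] [Module K V]

namespace Submodule

theorem exists_le_le_finrank_eq [FiniteDimensional K V] {U W : Submodule K V} (hUW : U ≤ W)
    {c : ℕ} (hUc : finrank K U ≤ c) (hcW : c ≤ finrank K W) :
    ∃ G : Submodule K V, U ≤ G ∧ G ≤ W ∧ finrank K G = c := by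
  induction c with
  | zero => exact ⟨U, le_rfl, hUW, by omega⟩
  | succ c ih =>
    rcases hUc.eq_or_lt with hU | hU
    · exact ⟨U, le_rfl, hUW, hU⟩
    obtain ⟨G, hUG, hGW, hG⟩ := ih (by omega) (by omega)
    obtain ⟨v, hvW, hvG⟩ := SetLike.exists_of_lt (hGW.lt_of_ne (by rintro rfl; omega))
    exact ⟨G ⊔ K ∙ v, hUG.trans le_sup_left,
      sup_le hGW ((span_singleton_le_iff_mem v W).2 hvW),
      by rw [finrank_sup_span_singleton hvG, hG]⟩

theorem exists_eq_add_smul_of_mem_sup_span_singleton {U : Submodule K V} {y z : V}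
    (hy : y ∈ U ⊔ K ∙ z) (hyU : y ∉ U) : ∃ u ∈ U, ∃ c : K, c ≠ 0 ∧ y = u + c • z := by
  obtain ⟨u, hu, _, hz, rfl⟩ := mem_sup.1 hy
  obtain ⟨c, rfl⟩ := mem_span_singleton.1 hz
  refine ⟨u, hu, c, ?_, rfl⟩
  rintro rfl
  simp [hu] at hyU

theorem sup_span_singleton_eq_of_sub_mem {U : Submodule K V} {z₁ z₂ : V} (h : z₁ - z₂ ∈ U) :
    U ⊔ K ∙ z₁ = U ⊔ K ∙ z₂ := by
  have key : ∀ a b : V, a - b ∈ U → U ⊔ K ∙ a ≤ U ⊔ K ∙ b := fun a b hab =>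
    sup_le le_sup_left <| (span_singleton_le_iff_mem _ _).2 <| by
      simpa using add_mem (mem_sup_left hab) (mem_sup_right (mem_span_singleton_self b))
  exact le_antisymm (key _ _ h) (key _ _ (by simpa using U.neg_mem h))

theorem sup_span_singleton_add_eq_of_mem_of_mem {D H : Submodule K V} (hDH : D ≤ H) {v : V}
    (hv : v ∉ H) {w₁ w₂ y : V} (hw₁ : w₁ ∈ H) (hw₂ : w₂ ∈ H) (hy₁ : y ∈ D ⊔ K ∙ (w₁ + v))
    (hy₂ : y ∈ D ⊔ K ∙ (w₂ + v)) (hyD : y ∉ D) : D ⊔ K ∙ (w₁ + v) = D ⊔ K ∙ (w₂ + v) := by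
  obtain ⟨u₁, hu₁, c₁, hc₁, rfl⟩ := exists_eq_add_smul_of_mem_sup_span_singleton hy₁ hyD
  obtain ⟨u₂, hu₂, c₂, -, hy⟩ := exists_eq_add_smul_of_mem_sup_span_singleton hy₂ hyD
  have hc : c₁ = c₂ := by
    by_contra hc
    refine hv ((smul_mem_iff H (sub_ne_zero.2 hc)).1 ?_)
    have : (c₁ - c₂) • v = (u₂ + c₂ • w₂) - (u₁ + c₁ • w₁) := by
      linear_combination (norm := module) hy
    rw [this]
    exact sub_mem (add_mem (hDH hu₂) (H.smul_mem _ hw₂)) (add_mem (hDH hu₁) (H.smul_mem _ hw₁))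
  subst hc
  have hw : w₁ - w₂ ∈ D := by
    refine (smul_mem_iff D hc₁).1 ?_
    have : c₁ • (w₁ - w₂) = u₂ - u₁ := by linear_combination (norm := module) hy
    exact this ▸ sub_mem hu₂ hu₁
  exact sup_span_singleton_eq_of_sub_mem (by simpa using hw)

def flat (W : Submodule K V) : Set (Projectivization K V) :=
  {x | x.submodule ≤ W}

theorem mem_flat_iff {W : Submodule K V} {x : Projectivization K V} :
    x ∈ W.flat ↔ x.rep ∈ W := by
  simp [flat, Projectivization.submodule_eq, span_singleton_le_iff_mem]

theorem mk_mem_flat_iff {W : Submodule K V} {v : V} (hv : v ≠ 0) :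
    Projectivization.mk K v hv ∈ W.flat ↔ v ∈ W := by
  simp [flat, Projectivization.submodule_mk, span_singleton_le_iff_mem]

@[simp]
theorem flat_bot : (⊥ : Submodule K V).flat = ∅ := by
  ext x
  simp [mem_flat_iff, Projectivization.rep_nonzero x]

theorem flat_mono {U W : Submodule K V} (h : U ≤ W) : U.flat ⊆ W.flat :=
  fun _ hx => le_trans hx h

theorem flat_subset_flat_iff {U W : Submodule K V} : U.flat ⊆ W.flat ↔ U ≤ W := by
  refine ⟨fun h u hu => ?_, flat_mono⟩
  rcases eq_or_ne u 0 with rfl | hu0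
  · exact W.zero_mem
  · exact (mk_mem_flat_iff hu0).1 (h ((mk_mem_flat_iff hu0).2 hu))

theorem nonempty_flat_diff_flat {U W : Submodule K V} (h : U < W) :
    (W.flat \ U.flat).Nonempty := by
  obtain ⟨v, hvW, hvU⟩ := SetLike.exists_of_lt h
  have hv : v ≠ 0 := by rintro rfl; exact hvU U.zero_mem
  exact ⟨.mk K v hv, (mk_mem_flat_iff hv).2 hvW, fun h => hvU ((mk_mem_flat_iff hv).1 h)⟩

theorem isAlmostFlat_flat_diff_flat [FiniteDimensional K V] {U W : Submodule K V} {k : ℕ} (hUW : U ≤ W)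
    (hW : finrank K W = k + 1) (hU : finrank K U ≤ k) : IsAlmostFlat k (W.flat \ U.flat) := by
  rcases Nat.eq_zero_or_eq_succ_pred (finrank K U) with h | h
  · rw [finrank_eq_zero.1 h, flat_bot, Set.sdiff_empty]
    exact .inl ⟨W, hW, rfl⟩
  · exact .inr ⟨W.flat, U.flat, _, ⟨W, hW, rfl⟩, ⟨U, h, rfl⟩, by omega, flat_mono hUW, rfl⟩

end Submodule

def HasAlmostFlatPartition (k : ℕ) (A : Set (Projectivization K V)) : Prop :=
  ∃ C : Set (Set (Projectivization K V)),
    ⋃₀ C = A ∧ C.PairwiseDisjoint id ∧ ∅ ∉ C ∧ ∀ B ∈ C, IsAlmostFlat k B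

namespace HasAlmostFlatPartition

variable {k : ℕ}

theorem empty : HasAlmostFlatPartition k (∅ : Set (Projectivization K V)) :=
  ⟨∅, by simp, by simp, by simp, by simp⟩

theorem of_isAlmostFlat {B : Set (Projectivization K V)} (hB : B.Nonempty)
    (h : IsAlmostFlat k B) : HasAlmostFlatPartition k B :=
  ⟨{B}, by simp, by simp, by simpa using hB.ne_empty.symm, by simpa using h⟩

theorem union {S T : Set (Projectivization K V)} (hS : HasAlmostFlatPartition k S)
    (hT : HasAlmostFlatPartition k T) (hST : Disjoint S T) :
    HasAlmostFlatPartition k (S ∪ T) := by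
  obtain ⟨C, rfl, hCdisj, hC0, hC⟩ := hS
  obtain ⟨D, rfl, hDdisj, hD0, hD⟩ := hT
  refine ⟨C ∪ D, Set.sUnion_union C D, ?_, by simp [hC0, hD0], ?_⟩
  · refine Set.pairwiseDisjoint_union.2 ⟨hCdisj, hDdisj, fun B hB B' hB' _ => ?_⟩
    exact hST.mono (Set.subset_sUnion_of_mem hB) (Set.subset_sUnion_of_mem hB')
  · rintro B (hB | hB)
    exacts [hC B hB, hD B hB]

theorem diff_trans {R S T : Set (Projectivization K V)} (hRS : R ⊆ S) (hST : S ⊆ T)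
    (h₁ : HasAlmostFlatPartition k (S \ R)) (h₂ : HasAlmostFlatPartition k (T \ S)) :
    HasAlmostFlatPartition k (T \ R) := by
  rw [← Set.sdiff_union_sdiff_cancel hST hRS, Set.union_comm]
  exact h₁.union h₂ (Set.disjoint_sdiff_right.mono_left Set.sdiff_subset)

theorem of_pieces {ι : Type*} {A : Set (Projectivization K V)} (s : Set ι)
    (P : ι → Set (Projectivization K V)) (hcover : ⋃ i ∈ s, P i = A)
    (hmeet : ∀ i ∈ s, ∀ j ∈ s, (P i ∩ P j).Nonempty → P i = P j)
    (hne : ∀ i ∈ s, (P i).Nonempty) (haf : ∀ i ∈ s, IsAlmostFlat k (P i)) :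
    HasAlmostFlatPartition k A := by
  refine ⟨P '' s, by rw [Set.sUnion_image, hcover], ?_, ?_, ?_⟩
  · rintro _ ⟨i, hi, rfl⟩ _ ⟨j, hj, rfl⟩ hij
    exact Set.disjoint_iff_inter_eq_empty.2 <|
      Set.not_nonempty_iff_eq_empty.1 fun h => hij (hmeet i hi j hj h)
  · rintro ⟨i, hi, h⟩
    exact (hne i hi).ne_empty h
  · rintro _ ⟨i, hi, rfl⟩
    exact haf i hi

end HasAlmostFlatPartition

variable [FiniteDimensional K V] {k : ℕ}

theorem hasAlmostFlatPartition_flat_sup_span_singleton_diff {H : Submodule K V}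
    (hH : k ≤ finrank K H) {v : V} (hv : v ∉ H) :
    HasAlmostFlatPartition k ((H ⊔ K ∙ v).flat \ H.flat) := by
  obtain ⟨D, -, hDH, hD⟩ := exists_le_le_finrank_eq (bot_le : ⊥ ≤ H) (by simp) hH
  have hwv : ∀ w ∈ H, w + v ∉ H := fun w hw h => hv (by simpa using H.sub_mem h hw)
  refine .of_pieces (H : Set V) (fun w => (D ⊔ K ∙ (w + v)).flat \ D.flat) ?_ ?_ ?_ ?_
  · refine Set.Subset.antisymm (Set.iUnion₂_subset fun w hw x ⟨hxw, hxD⟩ => ⟨?_, ?_⟩) ?_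
    · refine flat_mono (sup_le (hDH.trans le_sup_left) ?_) hxw
      exact (span_singleton_le_iff_mem _ _).2
        (add_mem (mem_sup_left hw) (mem_sup_right (mem_span_singleton_self v)))
    · obtain ⟨u, hu, c, hc, hx⟩ :=
        exists_eq_add_smul_of_mem_sup_span_singleton (mem_flat_iff.1 hxw) (mem_flat_iff.not.1 hxD)
      rw [mem_flat_iff, hx, H.add_mem_iff_right (hDH hu), smul_mem_iff _ hc]
      exact hwv w hw
    · rintro x ⟨hxv, hxH⟩
      obtain ⟨h, hh, c, hc, hx⟩ :=
        exists_eq_add_smul_of_mem_sup_span_singleton (mem_flat_iff.1 hxv) (mem_flat_iff.not.1 hxH)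
      refine Set.mem_iUnion₂.2 ⟨c⁻¹ • h, H.smul_mem _ hh, ?_, fun hxD => hxH (flat_mono hDH hxD)⟩
      refine mem_flat_iff.2 (mem_sup_right (mem_span_singleton.2 ⟨c, ?_⟩))
      rw [hx, smul_add, smul_smul, mul_inv_cancel₀ hc, one_smul]
  · rintro w₁ hw₁ w₂ hw₂ ⟨x, ⟨hx₁, hxD⟩, hx₂, -⟩
    simp only [sup_span_singleton_add_eq_of_mem_of_mem hDH hv hw₁ hw₂ (mem_flat_iff.1 hx₁)
      (mem_flat_iff.1 hx₂) (mem_flat_iff.not.1 hxD)]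
  · intro w hw
    refine ⟨.mk K (w + v) fun h => hwv w hw (h ▸ H.zero_mem), ?_, ?_⟩
    · exact (mk_mem_flat_iff _).2 (mem_sup_right (mem_span_singleton_self _))
    · exact fun h => hwv w hw (hDH ((mk_mem_flat_iff _).1 h))
  · intro w hw
    have hwvD : w + v ∉ D := fun h => hwv w hw (hDH h)
    exact isAlmostFlat_flat_diff_flat le_sup_left
      (by rw [finrank_sup_span_singleton hwvD, hD]) hD.le

theorem hasAlmostFlatPartition_flat_diff_flat_of_le_finrank {U W : Submodule K V}
    (hUW : U ≤ W) (hU : k ≤ finrank K U) : HasAlmostFlatPartition k (W.flat \ U.flat) := by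
  obtain ⟨t, ht⟩ := Nat.exists_eq_add_of_le (finrank_mono hUW)
  induction t generalizing U with
  | zero =>
    rw [eq_of_le_of_finrank_eq hUW ht.symm, Set.sdiff_self]
    exact .empty
  | succ t ih =>
    obtain ⟨v, hvW, hvU⟩ := SetLike.exists_of_lt (hUW.lt_of_ne (by rintro rfl; omega))
    have hUv := finrank_sup_span_singleton hvU
    have hUvW : U ⊔ K ∙ v ≤ W := sup_le hUW ((span_singleton_le_iff_mem v W).2 hvW)
    exact .diff_trans (flat_mono le_sup_left) (flat_mono hUvW)
      (hasAlmostFlatPartition_flat_sup_span_singleton_diff hU hvU) (ih hUvW (by omega) (by omega))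

theorem hasAlmostFlatPartition_flat_diff_flat {U W : Submodule K V} (hUW : U ≤ W)
    (hW : k + 1 ≤ finrank K W) : HasAlmostFlatPartition k (W.flat \ U.flat) := by
  rcases le_or_gt k (finrank K U) with hU | hU
  · exact hasAlmostFlatPartition_flat_diff_flat_of_le_finrank hUW hU
  obtain ⟨G, hUG, hGW, hG⟩ := exists_le_le_finrank_eq hUW (c := k + 1) (by omega) hW
  refine .diff_trans (flat_mono hUG) (flat_mono hGW) (.of_isAlmostFlat ?_ ?_)
    (hasAlmostFlatPartition_flat_diff_flat_of_le_finrank hGW (by omega))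
  · exact nonempty_flat_diff_flat (hUG.lt_of_ne (by rintro rfl; omega))
  · exact isAlmostFlat_flat_diff_flat hUG hG (by omega)

theorem IsAlmostFlat.hasAlmostFlatPartition {d : ℕ} {A : Set (Projectivization K V)}
    (hA : IsAlmostFlat d A) (hkd : k ≤ d) : HasAlmostFlatPartition k A := by
  rcases hA with ⟨W, hW, rfl⟩ | ⟨_, _, e, ⟨W, hW, rfl⟩, ⟨U, hU, rfl⟩, -, hUW, rfl⟩
  · have h := hasAlmostFlatPartition_flat_diff_flat (bot_le : ⊥ ≤ W) (k := k) (by omega)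
    rw [flat_bot, Set.sdiff_empty] at h
    exact h
  · exact hasAlmostFlatPartition_flat_diff_flat
      ((flat_subset_flat_iff (U := U) (W := W)).1 hUW) (by omega)

end

theorem almost_flat_partition_general (n d d' : ℕ)
    (K : Type) [Field K]
    (A : Set (Projectivization K (Fin (n + 1) → K))) (hA : IsAlmostFlat d A)
    (hd' : d' ≤ d) :
    ∃ C : Set (Set (Projectivization K (Fin (n + 1) → K))),
      ⋃₀ C = A ∧ C.PairwiseDisjoint id ∧ ∅ ∉ C ∧
      ∀ B ∈ C, IsAlmostFlat d' B :=
  hA.hasAlmostFlatPartition hd'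

/-- an almost-flat of dimension `d` in `F_qPⁿ` can be partitioned into
almost-flats of dimension `d'`, for any `0 < d' ≤ d`. -/
theorem almost_flat_partition (q n d d' : ℕ) (hn : 1 ≤ n)
    (K : Type) [Field K] [Fintype K] (hq : Fintype.card K = q)
    (A : Set (Projectivization K (Fin (n + 1) → K))) (hA : IsAlmostFlat d A)
    (hd'0 : 0 < d') (hd' : d' ≤ d) :
    ∃ C : Set (Set (Projectivization K (Fin (n + 1) → K))),
      ⋃₀ C = A ∧ C.PairwiseDisjoint id ∧ ∅ ∉ C ∧
      ∀ B ∈ C, IsAlmostFlat d' B :=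
  almost_flat_partition_general n d d' K A hA hd'
end

section
/- Let q be a prime power, n ≥ 1, and let Q = Q_1 × ⋯ × Q_n be a product of nonempty almost-flats in F_qP^{n−1} whose dimension pattern is not coordinatewise less than or equal to (0, 1, …, n−1). Let k+1 be the least index i such that the i-th entry of the dimension pattern of Q is at least i. Then Q can be partitioned into product sets of the form {p_1} × ⋯ × {p_k} × R_{k+1} × ⋯ × R_n, where each p_i is a point and each R_i is an almost-flat of dimension k+1; in particular, each part of this partition again has dimension pattern not coordinatewise less than or equal to (0, 1, …, n−1). -/
open Module Set
open scoped LinearAlgebra.Projectivization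

structure IsPartitionOf {α : Type*} (P : Set (Set α)) (A : Set α) : Prop where
  sUnion_eq : ⋃₀ P = A
  pairwiseDisjoint : P.PairwiseDisjoint id
  nonempty : ∀ B ∈ P, B.Nonempty

namespace IsPartitionOf

section

variable {α : Type*} {P P' : Set (Set α)} {A A' B : Set α}

theorem subset_of_mem (h : IsPartitionOf P A) (hB : B ∈ P) : B ⊆ A :=
  h.sUnion_eq ▸ subset_sUnion_of_mem hB

theorem singleton (hA : A.Nonempty) : IsPartitionOf {A} A :=
  ⟨sUnion_singleton A, pairwiseDisjoint_singleton _ _, fun _ hB => (mem_singleton_iff.mp hB) ▸ hA⟩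

theorem image_singleton (A : Set α) :
    IsPartitionOf ((fun a => ({a} : Set α)) '' A) A where
  sUnion_eq := by rw [sUnion_image, biUnion_of_singleton]
  pairwiseDisjoint := by
    rintro _ ⟨a, -, rfl⟩ _ ⟨b, -, rfl⟩ hab
    exact disjoint_singleton.mpr fun h => hab (h ▸ rfl)
  nonempty := by
    rintro _ ⟨a, -, rfl⟩
    exact singleton_nonempty a

theorem union (h : IsPartitionOf P A) (h' : IsPartitionOf P' A') (hAA' : Disjoint A A') :
    IsPartitionOf (P ∪ P') (A ∪ A') where
  sUnion_eq := by rw [sUnion_union, h.sUnion_eq, h'.sUnion_eq]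
  pairwiseDisjoint := h.pairwiseDisjoint.union h'.pairwiseDisjoint fun B hB B' hB' _ =>
    hAA'.mono (h.subset_of_mem hB) (h'.subset_of_mem hB')
  nonempty B hB := hB.elim (h.nonempty B) (h'.nonempty B)

end

variable {ι : Type*} {α : ι → Type*} {A : ∀ i, Set (α i)} {P : ∀ i, Set (Set (α i))}

theorem biUnion_univ_pi (h : ∀ i, IsPartitionOf (P i) (A i)) :
    ⋃ R ∈ univ.pi P, univ.pi R = univ.pi A := by
  ext x
  simp only [mem_iUnion₂, mem_univ_pi, exists_prop]
  constructor
  · rintro ⟨R, hR, hx⟩ i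
    exact (h i).subset_of_mem (hR i) (hx i)
  · intro hx
    have hcover : ∀ i, ∃ B ∈ P i, x i ∈ B :=
      fun i => mem_sUnion.mp ((h i).sUnion_eq.symm ▸ hx i)
    choose R hR hxR using hcover
    exact ⟨R, hR, hxR⟩

theorem pairwiseDisjoint_univ_pi (h : ∀ i, IsPartitionOf (P i) (A i)) :
    (univ.pi P).PairwiseDisjoint (fun R => univ.pi R) := by
  intro R hR R' hR' hne
  obtain ⟨i, hi⟩ := Function.ne_iff.mp hne
  exact disjoint_left.mpr fun x hx hx' =>
    disjoint_left.mp ((h i).pairwiseDisjoint (hR i trivial) (hR' i trivial) hi)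
      (hx i trivial) (hx' i trivial)

end IsPartitionOf

theorem not_forall_comp_sort_le {n : ℕ} {e : Fin n → ℕ} (σ : Equiv.Perm (Fin n))
    (hmono : Monotone (e ∘ σ)) (j : Fin n) (hj : (j : ℕ) < e (σ j)) :
    ¬ ∀ i : Fin n, e (Tuple.sort e i) ≤ i := by
  intro hle
  have hsort := congrFun (Tuple.comp_sort_eq_comp_iff_monotone.mpr hmono) j
  simp only [Function.comp_apply] at hsort
  exact (hj.trans_le (hsort ▸ hle j)).false

section Projective

variable {K V : Type*} [Field K] [AddCommGroup V] [Module K V]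

def Submodule.projPoints (W : Submodule K V) : Set (ℙ K V) := {x | x.submodule ≤ W}

def Submodule.joinDiff (U : Submodule K V) (x : ℙ K V) : Set (ℙ K V) :=
  ((K ∙ x.rep) ⊔ U).projPoints \ U.projPoints

namespace Submodule

variable {U W W' : Submodule K V} {x y : ℙ K V}

theorem mem_projPoints : x ∈ W.projPoints ↔ x.rep ∈ W := by
  change x.submodule ≤ W ↔ _
  rw [x.submodule_eq, span_singleton_le_iff_mem]

theorem mk_mem_projPoints {v : V} {hv : v ≠ 0} :
    Projectivization.mk K v hv ∈ W.projPoints ↔ v ∈ W := by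
  change (Projectivization.mk K v hv).submodule ≤ W ↔ _
  rw [Projectivization.submodule_mk, span_singleton_le_iff_mem]

theorem projPoints_bot : (⊥ : Submodule K V).projPoints = ∅ :=
  eq_empty_of_forall_notMem fun x hx => x.rep_nonzero (mem_bot K |>.mp (mem_projPoints.mp hx))

theorem projPoints_inf : (W ⊓ W').projPoints = W.projPoints ∩ W'.projPoints :=
  Set.ext fun x => (le_inf_iff : x.submodule ≤ W ⊓ W' ↔ _)

theorem projPoints_mono (h : W ≤ W') : W.projPoints ⊆ W'.projPoints :=
  fun _ hx => le_trans hx h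

theorem projPoints_submodule (p : ℙ K V) : p.submodule.projPoints = {p} := by
  ext x
  refine ⟨fun hx => Projectivization.submodule_injective ?_, fun hx => ?_⟩
  · exact eq_of_le_of_finrank_le hx (by rw [x.finrank_submodule, p.finrank_submodule])
  · rw [mem_singleton_iff.mp hx]
    exact le_refl p.submodule

theorem projPoints_diff_nonempty (h : W' < W) : (W.projPoints \ W'.projPoints).Nonempty := by
  obtain ⟨v, hvW, hvW'⟩ := SetLike.exists_of_lt h
  have hv : v ≠ 0 := fun hv => hvW' (hv ▸ W'.zero_mem)
  exact ⟨Projectivization.mk K v hv, mk_mem_projPoints.mpr hvW, mt mk_mem_projPoints.mp hvW'⟩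

theorem span_singleton_sup_eq_of_mem {v w : V} (hw : w ∈ (K ∙ v) ⊔ U) (hwU : w ∉ U) :
    (K ∙ w) ⊔ U = (K ∙ v) ⊔ U := by
  have hspan (x : V) : span K (insert x (U : Set V)) = (K ∙ x) ⊔ U := by
    rw [span_insert, span_eq]
  have hv : v ∈ (K ∙ w) ⊔ U := by
    rw [← hspan] at hw ⊢
    exact mem_span_insert_exchange hw (by rwa [span_eq])
  exact le_antisymm (sup_le ((span_singleton_le_iff_mem _ _).mpr hw) le_sup_right)
    (sup_le ((span_singleton_le_iff_mem _ _).mpr hv) le_sup_right)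

theorem self_mem_joinDiff (hx : x.rep ∉ U) : x ∈ U.joinDiff x :=
  ⟨mem_projPoints.mpr (mem_sup_left (mem_span_singleton_self _)), mt mem_projPoints.mp hx⟩

theorem joinDiff_eq_of_mem (hy : y ∈ U.joinDiff x) : U.joinDiff y = U.joinDiff x := by
  rw [joinDiff, joinDiff,
    span_singleton_sup_eq_of_mem (mem_projPoints.mp hy.1) (mt mem_projPoints.mpr hy.2)]

theorem joinDiff_subset (hUW' : U ≤ W') (hW'W : W' ≤ W) (hx : x ∈ W.projPoints \ W'.projPoints) :
    U.joinDiff x ⊆ W.projPoints \ W'.projPoints := by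
  intro y hy
  have hxW : (K ∙ x.rep) ⊔ U ≤ W :=
    sup_le ((span_singleton_le_iff_mem _ _).mpr (mem_projPoints.mp hx.1)) (hUW'.trans hW'W)
  refine ⟨projPoints_mono hxW hy.1, fun hyW' => hx.2 (mem_projPoints.mpr ?_)⟩
  have hyW' : (K ∙ y.rep) ⊔ U ≤ W' :=
    sup_le ((span_singleton_le_iff_mem _ _).mpr (mem_projPoints.mp hyW')) hUW'
  have hxU : x.rep ∉ U := fun h => hx.2 (mem_projPoints.mpr (hUW' h))
  have hxy : x ∈ U.joinDiff y := (joinDiff_eq_of_mem hy).symm ▸ self_mem_joinDiff hxU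
  exact hyW' (mem_projPoints.mp hxy.1)

theorem isPartitionOf_image_joinDiff (hUW' : U ≤ W') (hW'W : W' ≤ W) :
    IsPartitionOf (U.joinDiff '' (W.projPoints \ W'.projPoints))
      (W.projPoints \ W'.projPoints) := by
  have hxU : ∀ x ∈ W.projPoints \ W'.projPoints, x.rep ∉ U :=
    fun x hx h => hx.2 (mem_projPoints.mpr (hUW' h))
  refine ⟨subset_antisymm ?_ ?_, ?_, ?_⟩
  · exact sUnion_subset (forall_mem_image.mpr fun x hx => joinDiff_subset hUW' hW'W hx)
  · exact fun x hx => mem_sUnion_of_mem (self_mem_joinDiff (hxU x hx)) (mem_image_of_mem _ hx)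
  · rintro _ ⟨x, -, rfl⟩ _ ⟨x', -, rfl⟩ hne
    refine disjoint_left.mpr fun y hy hy' => hne ?_
    rw [← joinDiff_eq_of_mem hy, ← joinDiff_eq_of_mem hy']
  · rintro _ ⟨x, hx, rfl⟩
    exact ⟨x, self_mem_joinDiff (hxU x hx)⟩

end Submodule

open Submodule

theorem isAlmostFlat_zero_singleton (p : ℙ K V) : IsAlmostFlat 0 ({p} : Set (ℙ K V)) :=
  Or.inl ⟨p.submodule, p.finrank_submodule, (projPoints_submodule p).symm⟩

variable [FiniteDimensional K V]

theorem Submodule.exists_le_le_finrank_eq_s18 {W' W : Submodule K V} (hle : W' ≤ W) {r : ℕ}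
    (hr' : finrank K W' ≤ r) (hr : r ≤ finrank K W) :
    ∃ Y, W' ≤ Y ∧ Y ≤ W ∧ finrank K Y = r := by
  induction r, hr' using Nat.le_induction with
  | base => exact ⟨W', le_rfl, hle, rfl⟩
  | succ r _ ih =>
    obtain ⟨Y, hW'Y, hYW, rfl⟩ := ih (by omega)
    obtain ⟨v, hvW, hvY⟩ := SetLike.exists_of_lt
      (lt_of_le_of_ne hYW fun h => by rw [h] at hr; omega)
    exact ⟨Y ⊔ K ∙ v, le_sup_of_le_left hW'Y,
      sup_le hYW ((span_singleton_le_iff_mem v W).mpr hvW), finrank_sup_span_singleton hvY⟩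

theorem isAlmostFlat_projPoints_diff {W' W : Submodule K V} (hle : W' ≤ W)
    (hlt : finrank K W' < finrank K W) :
    IsAlmostFlat (finrank K W - 1) (W.projPoints \ W'.projPoints) := by
  rcases eq_or_ne W' ⊥ with rfl | hW'
  · left
    exact ⟨W, by omega, by rw [projPoints_bot, sdiff_empty]; rfl⟩
  · have hpos : 0 < finrank K W' := Nat.pos_of_ne_zero (mt Submodule.finrank_eq_zero.mp hW')
    right
    exact ⟨_, _, finrank K W' - 1, ⟨W, by omega, rfl⟩, ⟨W', by omega, rfl⟩, by omega,
      projPoints_mono hle, rfl⟩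

theorem Submodule.isAlmostFlat_joinDiff {U : Submodule K V} {x : ℙ K V} (hx : x.rep ∉ U) :
    IsAlmostFlat (finrank K U) (U.joinDiff x) := by
  have hrank : finrank K ↥((K ∙ x.rep) ⊔ U) = finrank K U + 1 := by
    rw [sup_comm, finrank_sup_span_singleton hx]
  simpa [hrank, joinDiff] using
    isAlmostFlat_projPoints_diff (le_sup_right : U ≤ (K ∙ x.rep) ⊔ U) (by omega)

theorem exists_isPartitionOf_projPoints_diff_of_le_finrank {r : ℕ} {W' W : Submodule K V}
    (hle : W' ≤ W) (hr : r ≤ finrank K W') :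
    ∃ P, IsPartitionOf P (W.projPoints \ W'.projPoints) ∧ ∀ B ∈ P, IsAlmostFlat r B := by
  obtain ⟨U, -, hUW', rfl⟩ := exists_le_le_finrank_eq_s18 bot_le (by simp) hr
  refine ⟨_, isPartitionOf_image_joinDiff hUW' hle, ?_⟩
  rintro _ ⟨x, hx, rfl⟩
  exact isAlmostFlat_joinDiff fun h => hx.2 (mem_projPoints.mpr (hUW' h))

theorem exists_isPartitionOf_projPoints_diff {k : ℕ} {W' W : Submodule K V} (hle : W' ≤ W)
    (hk : k + 2 ≤ finrank K W) :
    ∃ P, IsPartitionOf P (W.projPoints \ W'.projPoints) ∧ ∀ B ∈ P, IsAlmostFlat (k + 1) B := by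
  rcases le_or_gt (k + 1) (finrank K W') with hW' | hW'
  · exact exists_isPartitionOf_projPoints_diff_of_le_finrank hle hW'
  obtain ⟨Y, hW'Y, hYW, hY⟩ := exists_le_le_finrank_eq_s18 hle (by omega) hk
  obtain ⟨P, hP, hPflat⟩ := exists_isPartitionOf_projPoints_diff_of_le_finrank hYW (r := k + 1)
    (by omega)
  have hW'Y_lt : W' < Y := lt_of_le_of_ne hW'Y fun h => by rw [h] at hW'; omega
  refine ⟨P ∪ {Y.projPoints \ W'.projPoints}, ?_, ?_⟩
  · rw [← sdiff_union_sdiff_cancel (projPoints_mono hYW) (projPoints_mono hW'Y)]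
    exact hP.union (.singleton (projPoints_diff_nonempty hW'Y_lt))
      (disjoint_sdiff_left.mono_right sdiff_subset)
  · rintro B (hB | rfl)
    · exact hPflat B hB
    · simpa [hY] using isAlmostFlat_projPoints_diff hW'Y (by omega)

theorem IsAlmostFlat.exists_isPartitionOf {k m : ℕ} {A : Set (ℙ K V)} (hA : IsAlmostFlat m A)
    (hm : k + 1 ≤ m) : ∃ P, IsPartitionOf P A ∧ ∀ B ∈ P, IsAlmostFlat (k + 1) B := by
  rcases hA with ⟨W, hW, rfl⟩ | ⟨_, _, _, ⟨W, hW, rfl⟩, ⟨W', -, rfl⟩, -, -, rfl⟩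
  · obtain ⟨P, hP, hPflat⟩ := exists_isPartitionOf_projPoints_diff (bot_le : ⊥ ≤ W) (k := k)
      (by omega)
    rw [projPoints_bot, sdiff_empty] at hP
    exact ⟨P, hP, hPflat⟩
  · obtain ⟨P, hP, hPflat⟩ := exists_isPartitionOf_projPoints_diff (inf_le_right : W' ⊓ W ≤ W)
      (k := k) (by omega)
    rw [projPoints_inf, sdiff_inter_self_eq_sdiff] at hP
    exact ⟨P, hP, hPflat⟩

end Projective

theorem partition_into_minimal_patterns_general (n : ℕ)
    (K : Type) [Field K]
    (Q : Fin n → Set (Projectivization K (Fin n → K)))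
    (d : Fin n → ℕ)
    (hQ : ∀ i, IsAlmostFlat (d i) (Q i))
    (k : ℕ)
    (hk : IsLeast {j : ℕ | ∃ hj : j < n, j + 1 ≤ d (Tuple.sort d ⟨j, hj⟩)} k) :
    ∃ T : Set (Fin n → Set (Projectivization K (Fin n → K))),
      (⋃ R ∈ T, Set.univ.pi R) = Set.univ.pi Q ∧
      (∀ R ∈ T, ∀ R' ∈ T, R ≠ R' → Disjoint (Set.univ.pi R) (Set.univ.pi R')) ∧
      ∀ R ∈ T,
        (Set.univ.pi R).Nonempty ∧
        (∀ i, R i ⊆ Q i) ∧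
        (∀ i : Fin n,
          if (((Tuple.sort d).symm i : ℕ) < k)
          then ∃ p, R i = {p}
          else IsAlmostFlat (k + 1) (R i)) ∧
        ∃ e : Fin n → ℕ, (∀ i, IsAlmostFlat (e i) (R i)) ∧
          ¬ ∀ i : Fin n, e (Tuple.sort e i) ≤ (i : ℕ) := by
  obtain ⟨hkn, hkd⟩ := hk.1
  have hlarge : ∀ i, ¬ ((Tuple.sort d).symm i : ℕ) < k → k + 1 ≤ d i := fun i hi =>
    hkd.trans (by simpa using Tuple.monotone_sort d (not_lt.mp hi : ⟨k, hkn⟩ ≤ _))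
  set σ := Tuple.sort d
  have hfactor : ∀ i, ∃ P, IsPartitionOf P (Q i) ∧
      ∀ B ∈ P, if (σ.symm i : ℕ) < k then ∃ p, B = {p} else IsAlmostFlat (k + 1) B := by
    intro i
    split_ifs with hi
    · exact ⟨_, .image_singleton (Q i), by rintro _ ⟨p, -, rfl⟩; exact ⟨p, rfl⟩⟩
    · exact (hQ i).exists_isPartitionOf (hlarge i hi)
  choose P hP hshape using hfactor
  let e : Fin n → ℕ := fun i => if (σ.symm i : ℕ) < k then 0 else k + 1
  have he : ∀ i, ∀ B ∈ P i, IsAlmostFlat (e i) B := fun i B hB => by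
    have := hshape i B hB
    simp only [e]
    split_ifs at this ⊢
    exacts [this.elim fun p hp => hp ▸ isAlmostFlat_zero_singleton p, this]
  have he_mono : Monotone (e ∘ σ) := fun a b (hab : (a : ℕ) ≤ b) => by
    simp only [Function.comp_apply, e, Equiv.symm_apply_apply]
    split_ifs <;> omega
  refine ⟨univ.pi P, IsPartitionOf.biUnion_univ_pi hP,
    fun R hR R' hR' => IsPartitionOf.pairwiseDisjoint_univ_pi hP hR hR', fun R hR => ?_⟩
  rw [mem_univ_pi] at hR
  exact ⟨univ_pi_nonempty_iff.mpr fun i => (hP i).nonempty _ (hR i),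
    fun i => (hP i).subset_of_mem (hR i), fun i => hshape i _ (hR i),
    e, fun i => he i _ (hR i), not_forall_comp_sort_le σ he_mono ⟨k, hkn⟩ (by simp [e])⟩

/-- let `Q = Q₁ × ⋯ × Qₙ` be a product of nonempty almost-flats in
`F_qP^{n-1}` with dimensions `d i`, whose dimension pattern `d ∘ Tuple.sort d` (the
dimensions sorted non-decreasingly) is not coordinatewise `≤ (0, 1, …, n-1)`.  Let `k`
be least (0-indexed) with `(d ∘ Tuple.sort d) k ≥ k + 1`.  Then `Q` can be partitioned
into nonempty product sets whose factors at the `k` sorted positions of smallest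
dimensions are singletons and whose remaining factors are almost-flats of dimension
`k+1`; in particular every part is a product of almost-flats whose dimension pattern is
again not coordinatewise `≤ (0, 1, …, n-1)`. -/
theorem partition_into_minimal_patterns (q n : ℕ) (hn : 1 ≤ n)
    (K : Type) [Field K] [Fintype K] (hq : Fintype.card K = q)
    (Q : Fin n → Set (Projectivization K (Fin n → K)))
    (d : Fin n → ℕ)
    (hQ : ∀ i, IsAlmostFlat (d i) (Q i))
    (hne : ∀ i, (Q i).Nonempty)
    (hpat : ¬ ∀ i : Fin n, d (Tuple.sort d i) ≤ (i : ℕ))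
    (k : ℕ)
    (hk : IsLeast {j : ℕ | ∃ hj : j < n, j + 1 ≤ d (Tuple.sort d ⟨j, hj⟩)} k) :
    ∃ T : Set (Fin n → Set (Projectivization K (Fin n → K))),
      (⋃ R ∈ T, Set.univ.pi R) = Set.univ.pi Q ∧
      (∀ R ∈ T, ∀ R' ∈ T, R ≠ R' → Disjoint (Set.univ.pi R) (Set.univ.pi R')) ∧
      ∀ R ∈ T,
        (Set.univ.pi R).Nonempty ∧
        (∀ i, R i ⊆ Q i) ∧
        (∀ i : Fin n,
          if (((Tuple.sort d).symm i : ℕ) < k)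
          then ∃ p, R i = {p}
          else IsAlmostFlat (k + 1) (R i)) ∧
        ∃ e : Fin n → ℕ, (∀ i, IsAlmostFlat (e i) (R i)) ∧
          ¬ ∀ i : Fin n, e (Tuple.sort e i) ≤ (i : ℕ) :=
  partition_into_minimal_patterns_general n K Q d hQ k hk
end
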